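/- arXiv:1910.11403 — 8 statements merged into one kernel-verified Lean document; each statement's English description precedes it below -/
import Mathlib

section
/- Let X be a compact Hausdorff space, ν a capacity on X, and ∗ a continuous t-norm. If φ, ψ : X → [0,1] are continuous comonotone functions, then ∫^{∨∗}(φ∨ψ) dν = (∫^{∨∗}φ dν) ∨ (∫^{∨∗}ψ dν), where ∨ denotes pointwise maximum. -/
open Set

/-- A continuous triangular norm on `[0,1]`, modeled as a binary operation on `ℝ`
restricted to the unit interval. -/
structure Tnorm where
  op : ℝ → ℝ → ℝ
  mem' : ∀ a b : ℝ, a ∈ Set.Icc (0:ℝ) 1 → b ∈ Set.Icc (0:ℝ) 1 → op a b ∈ Set.Icc (0:ℝ) 1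
  comm' : ∀ a b : ℝ, op a b = op b a
  assoc' : ∀ a b c : ℝ, op (op a b) c = op a (op b c)
  mono' : ∀ a b c d : ℝ, a ≤ b → c ≤ d → op a c ≤ op b d
  one_id' : ∀ a ∈ Set.Icc (0:ℝ) 1, op a 1 = a
  cont' : Continuous fun p : ℝ × ℝ => op p.1 p.2

/-- An upper-semicontinuous capacity on a topological space `X`. -/
structure Capacity (X : Type*) [TopologicalSpace X] where
  toFun : Set X → ℝ
  nonneg' : ∀ A : Set X, 0 ≤ toFun A
  le_one' : ∀ A : Set X, toFun A ≤ 1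
  empty' : toFun (∅ : Set X) = 0
  univ' : toFun (Set.univ : Set X) = 1
  mono' : ∀ A B : Set X, A ⊆ B → toFun A ≤ toFun B
  usc' : ∀ F : Set X, IsClosed F → ∀ a : ℝ, toFun F < a →
    ∃ O : Set X, IsOpen O ∧ F ⊆ O ∧ ∀ B : Set X, B ⊆ O → IsCompact B → toFun B < a

/-- Two functions are comonotone (equiordered). -/
def Comonotone {X : Type*} (φ ψ : X → ℝ) : Prop :=
  ∀ x₁ x₂ : X, 0 ≤ (φ x₁ - φ x₂) * (ψ x₁ - ψ x₂)

/-- The t-normed integral `∫^{∨∗} f dν = sup { ν(f⁻¹[t,1]) ∗ t : t ∈ [0,1] }`. -/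
noncomputable def tInt {X : Type*} [TopologicalSpace X] (T : Tnorm) (ν : Capacity X)
    (f : X → ℝ) : ℝ :=
  sSup ((fun t : ℝ => T.op (ν.toFun (f ⁻¹' Set.Icc t 1)) t) '' Set.Icc (0:ℝ) 1)

/-!
Comonotonicity makes the superlevel sets `{φ ≥ t}` and `{ψ ≥ t}` nested for every `t`, and the
superlevel set of `φ ∨ ψ` is their union. A monotone capacity therefore takes the larger of its
two values on it, and a t-norm is monotone in its first argument, so for each `t` the integrand
of `tInt` for `φ ∨ ψ` is the maximum of the integrands for `φ` and `ψ`. Taking suprema over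
`t ∈ [0,1]` commutes with this pointwise maximum.
-/

theorem Comonotone.preimage_Ici_subset_or {X : Type*} {φ ψ : X → ℝ} (hco : Comonotone φ ψ)
    (t : ℝ) : φ ⁻¹' Ici t ⊆ ψ ⁻¹' Ici t ∨ ψ ⁻¹' Ici t ⊆ φ ⁻¹' Ici t := by
  refine or_iff_not_imp_left.2 fun hφψ x hψx => ?_
  obtain ⟨y, hφy, hψy⟩ := not_subset.1 hφψ
  simp only [mem_preimage, mem_Ici, not_le] at hψx hφy hψy ⊢
  by_contra! hφx
  exact (hco x y).not_gt (mul_neg_of_neg_of_pos (by linarith) (by linarith))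

theorem preimage_Icc_one_eq_preimage_Ici {X : Type*} {f : X → ℝ} (hf : ∀ x, f x ≤ 1) (t : ℝ) :
    f ⁻¹' Icc t 1 = f ⁻¹' Ici t := by
  ext x
  simp [hf x]

theorem preimage_max_Ici {X : Type*} (φ ψ : X → ℝ) (t : ℝ) :
    (fun x => max (φ x) (ψ x)) ⁻¹' Ici t = φ ⁻¹' Ici t ∪ ψ ⁻¹' Ici t := by
  ext x
  simp

theorem csSup_image_max {β α : Type*} [ConditionallyCompleteLinearOrder α] {s : Set β}
    {f g : β → α} (hf : BddAbove (f '' s)) (hg : BddAbove (g '' s)) :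
    sSup ((fun x => max (f x) (g x)) '' s) = max (sSup (f '' s)) (sSup (g '' s)) := by
  rw [image_eq_range] at hf hg
  simp only [image_eq_range]
  exact ciSup_sup_eq hf hg

theorem Tnorm.op_max_left (T : Tnorm) (a b c : ℝ) :
    T.op (max a b) c = max (T.op a c) (T.op b c) :=
  Monotone.map_max (f := fun a => T.op a c) fun _ _ hab => T.mono' _ _ _ _ hab le_rfl

namespace Capacity

variable {X : Type*} [TopologicalSpace X] (ν : Capacity X)

theorem toFun_union_of_subset_or {A B : Set X} (h : A ⊆ B ∨ B ⊆ A) :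
    ν.toFun (A ∪ B) = max (ν.toFun A) (ν.toFun B) := by
  rcases h with h | h
  · rw [union_eq_self_of_subset_left h, max_eq_right (ν.mono' _ _ h)]
  · rw [union_eq_self_of_subset_right h, max_eq_left (ν.mono' _ _ h)]

end Capacity

section tIntegrand

variable {X : Type*} [TopologicalSpace X] (T : Tnorm) (ν : Capacity X)

noncomputable def tIntegrand (f : X → ℝ) (t : ℝ) : ℝ :=
  T.op (ν.toFun (f ⁻¹' Icc t 1)) t

theorem tInt_eq_sSup_tIntegrand (f : X → ℝ) :
    tInt T ν f = sSup (tIntegrand T ν f '' Icc 0 1) :=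
  rfl

theorem bddAbove_tIntegrand_image (f : X → ℝ) : BddAbove (tIntegrand T ν f '' Icc 0 1) :=
  ⟨1, by
    rintro _ ⟨t, ht, rfl⟩
    exact (T.mem' _ _ ⟨ν.nonneg' _, ν.le_one' _⟩ ht).2⟩

theorem tIntegrand_max_of_comonotone {φ ψ : X → ℝ} (hφ : ∀ x, φ x ≤ 1) (hψ : ∀ x, ψ x ≤ 1)
    (hco : Comonotone φ ψ) (t : ℝ) :
    tIntegrand T ν (fun x => max (φ x) (ψ x)) t =
      max (tIntegrand T ν φ t) (tIntegrand T ν ψ t) := by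
  have hmax : ∀ x, max (φ x) (ψ x) ≤ 1 := fun x => max_le (hφ x) (hψ x)
  simp only [tIntegrand, preimage_Icc_one_eq_preimage_Ici hmax, preimage_max_Ici,
    preimage_Icc_one_eq_preimage_Ici hφ, preimage_Icc_one_eq_preimage_Ici hψ,
    ν.toFun_union_of_subset_or (hco.preimage_Ici_subset_or t)]
  exact T.op_max_left _ _ t

end tIntegrand

theorem tInt_comonotone_max_general {X : Type*} [TopologicalSpace X]
    (T : Tnorm) (ν : Capacity X) (φ ψ : X → ℝ)
    (hφr : ∀ x, φ x ∈ Set.Icc (0:ℝ) 1) (hψr : ∀ x, ψ x ∈ Set.Icc (0:ℝ) 1)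
    (hco : Comonotone φ ψ) :
    tInt T ν (fun x => max (φ x) (ψ x)) = max (tInt T ν φ) (tInt T ν ψ) := by
  have hmax : tIntegrand T ν (fun x => max (φ x) (ψ x)) =
      fun t => max (tIntegrand T ν φ t) (tIntegrand T ν ψ t) :=
    funext <| tIntegrand_max_of_comonotone T ν (fun x => (hφr x).2) (fun x => (hψr x).2) hco
  simp only [tInt_eq_sSup_tIntegrand, hmax]
  exact csSup_image_max (bddAbove_tIntegrand_image T ν φ) (bddAbove_tIntegrand_image T ν ψ)

/-- Comonotone maxitivity of the t-normed integral. -/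
theorem tInt_comonotone_max {X : Type*} [TopologicalSpace X] [CompactSpace X] [T2Space X]
    (T : Tnorm) (ν : Capacity X) (φ ψ : X → ℝ) (hφc : Continuous φ) (hψc : Continuous ψ)
    (hφr : ∀ x, φ x ∈ Set.Icc (0:ℝ) 1) (hψr : ∀ x, ψ x ∈ Set.Icc (0:ℝ) 1)
    (hco : Comonotone φ ψ) :
    tInt T ν (fun x => max (φ x) (ψ x)) = max (tInt T ν φ) (tInt T ν ψ) :=
  tInt_comonotone_max_general T ν φ ψ hφr hψr hco
end

section
/- Let X be a compact Hausdorff space, ν a capacity on X, and ∗ a continuous t-norm. Then for every constant c ∈ [0,1] and continuous ψ : X → [0,1], ∫^{∨∗}(c ∗ ψ) dν = c ∗ ∫^{∨∗}ψ dν, where (c ∗ ψ)(x) = c ∗ ψ(x). -/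
open Set

/- Multiplying the integrand by `c` rescales every level: the level set of `c ∗ ψ` at `c ∗ t`
contains the level set of `ψ` at `t`, which gives `c ∗ ∫ψ ≤ ∫(c ∗ ψ)` by associativity and
commutativity of `∗`. Conversely, the level set of `c ∗ ψ` at `s` is contained in the level set
of `ψ` at the least `t₀ ∈ [0,1]` with `s ≤ c ∗ t₀`, which exists because `c ∗ ·` is continuous. -/

theorem exists_isLeast_Icc_le_of_continuous {g : ℝ → ℝ} (hg : Continuous g) {a b s : ℝ}
    (h : ∃ t ∈ Icc a b, s ≤ g t) : ∃ t₀, IsLeast {t ∈ Icc a b | s ≤ g t} t₀ :=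
  (isCompact_Icc.inter_right (isClosed_le continuous_const hg)).exists_isLeast h

namespace Tnorm

variable (T : Tnorm)

theorem op_left_comm (a b c : ℝ) : T.op a (T.op b c) = T.op b (T.op a c) := by
  rw [← T.assoc', T.comm' a b, T.assoc']

theorem zero_op {a : ℝ} (ha : a ∈ Icc (0 : ℝ) 1) : T.op 0 a = 0 := by
  have h0 : T.op 0 1 = 0 := T.one_id' 0 ⟨le_rfl, zero_le_one⟩
  refine le_antisymm ((T.mono' 0 0 a 1 le_rfl ha.2).trans_eq h0) ?_
  exact (T.mem' 0 a ⟨le_rfl, zero_le_one⟩ ha).1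

theorem monotone_op (c : ℝ) : Monotone (T.op c) :=
  fun _ _ h => T.mono' c c _ _ le_rfl h

theorem continuous_op (c : ℝ) : Continuous (T.op c) :=
  T.cont'.comp (continuous_const.prodMk continuous_id)

end Tnorm

section tInt

variable {X : Type*} [TopologicalSpace X] (T : Tnorm) (ν : Capacity X) (f : X → ℝ)

theorem op_capacity_mem_Icc (A : Set X) {t : ℝ} (ht : t ∈ Icc (0 : ℝ) 1) :
    T.op (ν.toFun A) t ∈ Icc (0 : ℝ) 1 :=
  T.mem' _ _ ⟨ν.nonneg' A, ν.le_one' A⟩ ht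

theorem bddAbove_tInt_image :
    BddAbove ((fun t => T.op (ν.toFun (f ⁻¹' Icc t 1)) t) '' Icc (0 : ℝ) 1) :=
  ⟨1, forall_mem_image.2 fun _ ht => (op_capacity_mem_Icc T ν _ ht).2⟩

theorem nonempty_tInt_image :
    ((fun t => T.op (ν.toFun (f ⁻¹' Icc t 1)) t) '' Icc (0 : ℝ) 1).Nonempty :=
  (nonempty_Icc.2 zero_le_one).image _

theorem le_tInt {t : ℝ} (ht : t ∈ Icc (0 : ℝ) 1) :
    T.op (ν.toFun (f ⁻¹' Icc t 1)) t ≤ tInt T ν f :=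
  le_csSup (bddAbove_tInt_image T ν f) (mem_image_of_mem _ ht)

theorem tInt_le {a : ℝ} (h : ∀ t ∈ Icc (0 : ℝ) 1, T.op (ν.toFun (f ⁻¹' Icc t 1)) t ≤ a) :
    tInt T ν f ≤ a :=
  csSup_le (nonempty_tInt_image T ν f) (forall_mem_image.2 h)

theorem tInt_mem_Icc : tInt T ν f ∈ Icc (0 : ℝ) 1 :=
  ⟨(op_capacity_mem_Icc T ν _ ⟨le_rfl, zero_le_one⟩).1.trans
      (le_tInt T ν f ⟨le_rfl, zero_le_one⟩),
    tInt_le T ν f fun _ ht => (op_capacity_mem_Icc T ν _ ht).2⟩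

theorem op_tInt_eq_sSup (c : ℝ) :
    T.op c (tInt T ν f) =
      sSup (T.op c '' ((fun t => T.op (ν.toFun (f ⁻¹' Icc t 1)) t) '' Icc (0 : ℝ) 1)) :=
  (T.monotone_op c).map_csSup_of_continuousAt (T.continuous_op c).continuousAt
    (nonempty_tInt_image T ν f) (bddAbove_tInt_image T ν f)

variable {T ν} {c : ℝ} (hc : c ∈ Icc (0 : ℝ) 1) {ψ : X → ℝ} (hψ : ∀ x, ψ x ∈ Icc (0 : ℝ) 1)
include hc hψ

theorem op_const_tInt_le : T.op c (tInt T ν ψ) ≤ tInt T ν (fun x => T.op c (ψ x)) := by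
  rw [op_tInt_eq_sSup]
  refine csSup_le ((nonempty_tInt_image T ν ψ).image _) ?_
  rintro _ ⟨_, ⟨t, ht, rfl⟩, rfl⟩
  have hsub : ψ ⁻¹' Icc t 1 ⊆ (fun x => T.op c (ψ x)) ⁻¹' Icc (T.op c t) 1 :=
    fun x hx => ⟨T.monotone_op c hx.1, (T.mem' c (ψ x) hc (hψ x)).2⟩
  calc T.op c (T.op (ν.toFun (ψ ⁻¹' Icc t 1)) t)
      = T.op (ν.toFun (ψ ⁻¹' Icc t 1)) (T.op c t) := T.op_left_comm _ _ _
    _ ≤ T.op (ν.toFun ((fun x => T.op c (ψ x)) ⁻¹' Icc (T.op c t) 1)) (T.op c t) :=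
        T.mono' _ _ _ _ (ν.mono' _ _ hsub) le_rfl
    _ ≤ tInt T ν (fun x => T.op c (ψ x)) := le_tInt T ν _ (T.mem' c t hc ht)

theorem op_capacity_level_op_const_le {s : ℝ} (hs : s ∈ Icc (0 : ℝ) 1) :
    T.op (ν.toFun ((fun x => T.op c (ψ x)) ⁻¹' Icc s 1)) s ≤ T.op c (tInt T ν ψ) := by
  by_cases hA : ∃ x, s ≤ T.op c (ψ x)
  · obtain ⟨x, hx⟩ := hA
    obtain ⟨t₀, ⟨ht₀, hst₀⟩, hleast⟩ :=
      exists_isLeast_Icc_le_of_continuous (T.continuous_op c) ⟨ψ x, hψ x, hx⟩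
    have hsub : (fun x => T.op c (ψ x)) ⁻¹' Icc s 1 ⊆ ψ ⁻¹' Icc t₀ 1 :=
      fun y hy => ⟨hleast ⟨hψ y, hy.1⟩, (hψ y).2⟩
    calc T.op (ν.toFun ((fun x => T.op c (ψ x)) ⁻¹' Icc s 1)) s
        ≤ T.op (ν.toFun (ψ ⁻¹' Icc t₀ 1)) (T.op c t₀) := T.mono' _ _ _ _ (ν.mono' _ _ hsub) hst₀
      _ = T.op c (T.op (ν.toFun (ψ ⁻¹' Icc t₀ 1)) t₀) := T.op_left_comm _ _ _
      _ ≤ T.op c (tInt T ν ψ) := T.monotone_op c (le_tInt T ν ψ ht₀)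
  · have hempty : (fun x => T.op c (ψ x)) ⁻¹' Icc s 1 = ∅ :=
      eq_empty_iff_forall_notMem.2 fun x hx => hA ⟨x, hx.1⟩
    rw [hempty, ν.empty', T.zero_op hs]
    exact (T.mem' c _ hc (tInt_mem_Icc T ν ψ)).1

theorem tInt_op_const_le : tInt T ν (fun x => T.op c (ψ x)) ≤ T.op c (tInt T ν ψ) :=
  tInt_le T ν _ fun _ hs => op_capacity_level_op_const_le hc hψ hs

end tInt

theorem tInt_tnorm_homogeneous_general {X : Type*} [TopologicalSpace X]
    (T : Tnorm) (ν : Capacity X) (c : ℝ) (hc : c ∈ Set.Icc (0:ℝ) 1)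
    (ψ : X → ℝ) (hψr : ∀ x, ψ x ∈ Set.Icc (0:ℝ) 1) :
    tInt T ν (fun x => T.op c (ψ x)) = T.op c (tInt T ν ψ) :=
  le_antisymm (tInt_op_const_le hc hψr) (op_const_tInt_le hc hψr)

/-- Homogeneity of the t-normed integral with respect to the t-norm. -/
theorem tInt_tnorm_homogeneous {X : Type*} [TopologicalSpace X] [CompactSpace X] [T2Space X]
    (T : Tnorm) (ν : Capacity X) (c : ℝ) (hc : c ∈ Set.Icc (0:ℝ) 1)
    (ψ : X → ℝ) (hψc : Continuous ψ) (hψr : ∀ x, ψ x ∈ Set.Icc (0:ℝ) 1) :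
    tInt T ν (fun x => T.op c (ψ x)) = T.op c (tInt T ν ψ) :=
  tInt_tnorm_homogeneous_general T ν c hc ψ hψr
end

section
/- Let X be a compact Hausdorff space, ∗ a continuous t-norm, φ : X → [0,1] continuous, t < max φ, and ψ : X → [0,1] continuous with ψ ≡ 1 on φ⁻¹([t,1]). Then there exists a continuous ψ' : X → [0,1] with ψ' ≡ 1 on φ⁻¹([t,1]), ψ' ≤ ψ, and ψ' comonotone with φ. -/
/-!
By compactness, `ψ ≡ 1` on `{φ ≥ t}` upgrades to a uniform estimate `1 - ψ y ≤ ω (t - φ y)`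
for a continuous nondecreasing modulus `ω ≥ 0` with `ω 0 = 0`. The inf-convolution
`G s = ⨅ y, ψ y + ω (s - φ y)` is then continuous and nondecreasing, `G (φ x) ≤ ψ x`, and
`G ≥ 1` on `[t, ∞)`. So `ψ' = G ∘ φ` works, and it is comonotone with `φ` because `G` is
monotone.
-/

open Set

lemma comonotone_comp_of_monotone {X : Type*} {g : ℝ → ℝ} (hg : Monotone g) (φ : X → ℝ) :
    Comonotone (fun x => g (φ x)) φ := by
  intro x₁ x₂
  rcases le_total (φ x₁) (φ x₂) with h | h
  · exact mul_nonneg_of_nonpos_of_nonpos (sub_nonpos.2 (hg h)) (sub_nonpos.2 h)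
  · exact mul_nonneg (sub_nonneg.2 (hg h)) (sub_nonneg.2 h)

lemma exists_pos_forall_le_of_nonpos_imp_nonpos {X : Type*} [TopologicalSpace X]
    [CompactSpace X] {r v : X → ℝ} (hr : Continuous r) (hv : Continuous v)
    (hrv : ∀ x, r x ≤ 0 → v x ≤ 0) {ε : ℝ} (hε : 0 < ε) :
    ∃ δ > 0, ∀ x, r x < δ → v x ≤ ε := by
  have hK : IsCompact {x | ε ≤ v x} := (isClosed_le continuous_const hv).isCompact
  have hr_pos : ∀ x ∈ {x | ε ≤ v x}, 0 < r x := fun x hx =>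
    lt_of_not_ge fun h => (hrv x h).not_gt (hε.trans_le hx)
  obtain ⟨δ, hδ, hδK⟩ := hK.exists_forall_le' hr.continuousOn hr_pos
  exact ⟨δ, hδ, fun x hx => le_of_not_gt fun h => (hδK x h.le).not_gt hx⟩

noncomputable def rampSeries (d : ℕ → ℝ) (s : ℝ) : ℝ :=
  ∑' k, min ((1 / 2 : ℝ) ^ k) (max s 0 / d k)

section RampSeries

variable {d : ℕ → ℝ}

lemma rampSeries_term_nonneg (hd : ∀ k, 0 ≤ d k) (s : ℝ) (k : ℕ) :
    0 ≤ min ((1 / 2 : ℝ) ^ k) (max s 0 / d k) :=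
  le_min (by positivity) (div_nonneg (le_max_right _ _) (hd k))

lemma summable_rampSeries (hd : ∀ k, 0 ≤ d k) (s : ℝ) :
    Summable fun k => min ((1 / 2 : ℝ) ^ k) (max s 0 / d k) :=
  summable_geometric_two.of_nonneg_of_le (rampSeries_term_nonneg hd s) fun _ => min_le_left _ _

lemma rampSeries_nonneg (hd : ∀ k, 0 ≤ d k) (s : ℝ) : 0 ≤ rampSeries d s :=
  tsum_nonneg (rampSeries_term_nonneg hd s)

lemma rampSeries_zero (d : ℕ → ℝ) : rampSeries d 0 = 0 := by
  simp [rampSeries]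

lemma continuous_rampSeries (hd : ∀ k, 0 ≤ d k) : Continuous (rampSeries d) := by
  refine continuous_tsum (fun k => by fun_prop) summable_geometric_two fun k s => ?_
  rw [Real.norm_of_nonneg (rampSeries_term_nonneg hd s k)]
  exact min_le_left _ _

lemma monotone_rampSeries (hd : ∀ k, 0 < d k) : Monotone (rampSeries d) := fun a b hab =>
  (summable_rampSeries (fun k => (hd k).le) a).tsum_le_tsum
    (fun k => min_le_min_left _ (div_le_div_of_nonneg_right (max_le_max_right 0 hab) (hd k).le))
    (summable_rampSeries (fun k => (hd k).le) b)

lemma pow_le_rampSeries (hd : ∀ k, 0 < d k) {s : ℝ} {k : ℕ} (hk : d k ≤ s) :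
    (1 / 2 : ℝ) ^ k ≤ rampSeries d s := by
  have hterm : min ((1 / 2 : ℝ) ^ k) (max s 0 / d k) = (1 / 2 : ℝ) ^ k := by
    refine min_eq_left ?_
    calc (1 / 2 : ℝ) ^ k ≤ 1 := pow_le_one₀ (by norm_num) (by norm_num)
      _ ≤ max s 0 / d k := (one_le_div (hd k)).2 (hk.trans (le_max_left _ _))
  rw [← hterm]
  exact (summable_rampSeries (fun k => (hd k).le) s).le_tsum k
    fun j _ => rampSeries_term_nonneg (fun k => (hd k).le) s j

end RampSeries

theorem exists_continuous_modulus {ι : Type*} (r v : ι → ℝ) (hv : ∀ i, v i ≤ 1)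
    (h : ∀ ε > 0, ∃ δ > 0, ∀ i, r i < δ → v i ≤ ε) :
    ∃ ω : ℝ → ℝ, Continuous ω ∧ Monotone ω ∧ (∀ s, 0 ≤ ω s) ∧ ω 0 = 0 ∧
      ∀ i, v i ≤ ω (r i) := by
  choose d hd hdv using fun k : ℕ => h ((1 / 2) ^ (k + 1)) (by positivity)
  refine ⟨rampSeries d, continuous_rampSeries (fun k => (hd k).le), monotone_rampSeries hd,
    rampSeries_nonneg (fun k => (hd k).le), rampSeries_zero d, fun i => ?_⟩
  rcases le_or_gt (v i) 0 with hvi | hvi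
  · exact hvi.trans (rampSeries_nonneg (fun k => (hd k).le) _)
  -- `v i ∈ (2^-(n+1), 2^-n]`, so `r i < d n` is impossible and the `n`-th ramp is saturated.
  obtain ⟨n, hlt, hle⟩ :=
    exists_nat_pow_near_of_lt_one hvi (hv i) (by norm_num : (0 : ℝ) < 1 / 2) (by norm_num)
  exact hle.trans (pow_le_rampSeries hd (le_of_not_gt fun hr => (hdv n i hr).not_gt hlt))

noncomputable def infConv {X : Type*} (φ ψ : X → ℝ) (ω : ℝ → ℝ) (s : ℝ) : ℝ :=
  ⨅ y, ψ y + ω (s - φ y)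

section InfConv

variable {X : Type*} [TopologicalSpace X] [CompactSpace X] {φ ψ : X → ℝ} {ω : ℝ → ℝ}

lemma bddBelow_range_add_comp_sub (hφ : Continuous φ) (hψ : Continuous ψ) (hω : Continuous ω)
    (s : ℝ) : BddBelow (range fun y => ψ y + ω (s - φ y)) :=
  (isCompact_range (by fun_prop)).bddBelow

lemma continuous_infConv (hφ : Continuous φ) (hψ : Continuous ψ) (hω : Continuous ω) :
    Continuous (infConv φ ψ ω) := by
  have := isCompact_univ.continuous_sInf (f := fun s y => ψ y + ω (s - φ y)) (by fun_prop)
  simp only [image_univ] at this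
  exact this

lemma monotone_infConv (hφ : Continuous φ) (hψ : Continuous ψ) (hω : Continuous ω)
    (hωm : Monotone ω) : Monotone (infConv φ ψ ω) := fun a _ hab =>
  ciInf_mono (bddBelow_range_add_comp_sub hφ hψ hω a)
    fun _ => add_le_add_right (hωm (sub_le_sub_right hab _)) _

lemma infConv_apply_le (hφ : Continuous φ) (hψ : Continuous ψ) (hω : Continuous ω)
    (hω0 : ω 0 = 0) (x : X) : infConv φ ψ ω (φ x) ≤ ψ x :=
  (ciInf_le (bddBelow_range_add_comp_sub hφ hψ hω _) x).trans_eq (by simp [hω0])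

end InfConv

theorem exists_comonotone_dominated_general {X : Type*} [TopologicalSpace X] [CompactSpace X]
    (φ ψ : X → ℝ) (hφc : Continuous φ) (hψc : Continuous ψ)
    (hφr : ∀ x, φ x ∈ Set.Icc (0:ℝ) 1) (hψr : ∀ x, ψ x ∈ Set.Icc (0:ℝ) 1)
    (t : ℝ)
    (hψ1 : ∀ x ∈ φ ⁻¹' Set.Icc t 1, ψ x = 1) :
    ∃ ψ' : X → ℝ, Continuous ψ' ∧ (∀ x, ψ' x ∈ Set.Icc (0:ℝ) 1) ∧
      (∀ x ∈ φ ⁻¹' Set.Icc t 1, ψ' x = 1) ∧ (∀ x, ψ' x ≤ ψ x) ∧ Comonotone ψ' φ := by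
  have huniform : ∀ ε > 0, ∃ δ > 0, ∀ y, t - φ y < δ → 1 - ψ y ≤ ε := fun ε hε =>
    exists_pos_forall_le_of_nonpos_imp_nonpos (by fun_prop) (by fun_prop)
      (fun y hy => by rw [hψ1 y ⟨by linarith, (hφr y).2⟩, sub_self]) hε
  obtain ⟨ω, hωc, hωm, hω_nonneg, hω0, hω⟩ :=
    exists_continuous_modulus (fun y => t - φ y) (fun y => 1 - ψ y)
      (fun y => by linarith [(hψr y).1]) huniform
  have hGψ := infConv_apply_le hφc hψc hωc hω0
  refine ⟨fun x => infConv φ ψ ω (φ x), (continuous_infConv hφc hψc hωc).comp hφc,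
    fun x => ⟨?_, (hGψ x).trans (hψr x).2⟩, fun x hx => ?_, hGψ,
    comonotone_comp_of_monotone (monotone_infConv hφc hψc hωc hωm) φ⟩
  · have : Nonempty X := ⟨x⟩
    exact le_ciInf fun y => add_nonneg (hψr y).1 (hω_nonneg _)
  · have : Nonempty X := ⟨x⟩
    refine le_antisymm (hψ1 x hx ▸ hGψ x) (le_ciInf fun y => ?_)
    calc (1 : ℝ) ≤ ψ y + ω (t - φ y) := by linarith [hω y]
      _ ≤ ψ y + ω (φ x - φ y) := by gcongr; exact hωm (by linarith [hx.1])

/-- Given `t < max φ` and `ψ ≡ 1` on `φ⁻¹[t,1]`, there is `ψ' ≤ ψ`, still `≡ 1` on `φ⁻¹[t,1]`,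
which is comonotone with `φ`. -/
theorem exists_comonotone_dominated {X : Type*} [TopologicalSpace X] [CompactSpace X]
    [T2Space X] (φ ψ : X → ℝ) (hφc : Continuous φ) (hψc : Continuous ψ)
    (hφr : ∀ x, φ x ∈ Set.Icc (0:ℝ) 1) (hψr : ∀ x, ψ x ∈ Set.Icc (0:ℝ) 1)
    (t : ℝ) (ht : ∃ x, t < φ x)
    (hψ1 : ∀ x ∈ φ ⁻¹' Set.Icc t 1, ψ x = 1) :
    ∃ ψ' : X → ℝ, Continuous ψ' ∧ (∀ x, ψ' x ∈ Set.Icc (0:ℝ) 1) ∧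
      (∀ x ∈ φ ⁻¹' Set.Icc t 1, ψ' x = 1) ∧ (∀ x, ψ' x ≤ ψ x) ∧ Comonotone ψ' φ :=
  exists_comonotone_dominated_general φ ψ hφc hψc hφr hψr t hψ1
end

section
/- Let X be a compact Hausdorff space. For every possibility capacity ν on X (satisfying ν(∪_t A_t) = sup_t ν(A_t) for any family of closed sets with closed union) and every closed nonempty F ⊆ X, we have ν(F) = max{ν({x}) : x ∈ F}; in particular ν is completely determined by its density [ν] : x ↦ ν({x}), which is an upper semicontinuous function with max [ν] = 1. Conversely, every upper semicontinuous f : X → [0,1] with max f = 1 defines a possibility capacity via F ↦ max{f(x) : x ∈ F}. -/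
open Set

/-- A possibility capacity: maxitive on closed sets. -/
def IsPossibility {X : Type*} [TopologicalSpace X] (ν : Capacity X) : Prop :=
  ∀ A B : Set X, IsClosed A → IsClosed B →
    ν.toFun (A ∪ B) = max (ν.toFun A) (ν.toFun B)

/-!
A closed set is the union of its singletons, so complete maxitivity writes `ν F` as the supremum
of the density `x ↦ ν {x}` over `F`. The density inherits upper semicontinuity from `ν`, hence
attains this supremum on the compact set `F`. Conversely, `F ↦ sSup (f '' F)` is completely
maxitive because suprema over a union are suprema of suprema, and it is upper semicontinuous
because an upper semicontinuous `f` attains its maximum on every compact `B ⊆ {f < a}`.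
-/

section SupImage

variable {X : Type*} {f : X → ℝ}

theorem sSup_image_mono_of_nonneg (hf0 : ∀ x, 0 ≤ f x) (hf : BddAbove (range f)) {A B : Set X}
    (hAB : A ⊆ B) : sSup (f '' A) ≤ sSup (f '' B) :=
  Real.sSup_le
    (forall_mem_image.2 fun _ hx =>
      le_csSup (hf.mono (image_subset_range f B)) ⟨_, hAB hx, rfl⟩)
    (Real.sSup_nonneg (forall_mem_image.2 fun x _ => hf0 x))

theorem sSup_image_sUnion_of_nonneg (hf0 : ∀ x, 0 ≤ f x) (hf : BddAbove (range f))
    (𝒜 : Set (Set X)) : sSup (f '' ⋃₀ 𝒜) = sSup ((fun A => sSup (f '' A)) '' 𝒜) := by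
  have hsup_nonneg (A : Set X) : 0 ≤ sSup (f '' A) :=
    Real.sSup_nonneg (forall_mem_image.2 fun x _ => hf0 x)
  have hbdd : BddAbove ((fun A => sSup (f '' A)) '' 𝒜) :=
    ⟨sSup (f '' univ), forall_mem_image.2 fun A _ =>
      sSup_image_mono_of_nonneg hf0 hf (subset_univ A)⟩
  apply le_antisymm
  · refine Real.sSup_le (forall_mem_image.2 fun x ⟨A, hA, hxA⟩ => ?_)
      (Real.sSup_nonneg (forall_mem_image.2 fun A _ => hsup_nonneg A))
    calc f x ≤ sSup (f '' A) := le_csSup (hf.mono (image_subset_range f A)) ⟨x, hxA, rfl⟩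
      _ ≤ _ := le_csSup hbdd ⟨A, hA, rfl⟩
  · exact Real.sSup_le (forall_mem_image.2 fun A hA =>
      sSup_image_mono_of_nonneg hf0 hf (subset_sUnion_of_mem hA)) (hsup_nonneg _)

-- `0 < a` is only needed for `B = ∅`, where `sSup ∅ = 0`.
theorem UpperSemicontinuous.sSup_image_lt_of_isCompact [TopologicalSpace X]
    (hf : UpperSemicontinuous f) {B : Set X} (hB : IsCompact B) {a : ℝ}
    (hBa : ∀ x ∈ B, f x < a) (ha : 0 < a) : sSup (f '' B) < a := by
  rcases B.eq_empty_or_nonempty with rfl | hne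
  · rwa [image_empty, Real.sSup_empty]
  · obtain ⟨x, hxB, hmax⟩ :=
      UpperSemicontinuousOn.exists_isMaxOn hne hB (hf.upperSemicontinuousOn B)
    exact (csSup_le (hne.image f) (forall_mem_image.2 (isMaxOn_iff.1 hmax))).trans_lt (hBa x hxB)

end SupImage

namespace Capacity

variable {X : Type*} [TopologicalSpace X]

def IsCompletelyMaxitive (ν : Capacity X) : Prop :=
  ∀ 𝒜 : Set (Set X), (∀ A ∈ 𝒜, IsClosed A) → IsClosed (⋃₀ 𝒜) →
    ν.toFun (⋃₀ 𝒜) = sSup (ν.toFun '' 𝒜)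

def density (ν : Capacity X) (x : X) : ℝ := ν.toFun {x}

theorem nonempty (ν : Capacity X) : Nonempty X := by
  by_contra h
  have h₁ := ν.univ'
  rw [univ_eq_empty_iff.2 (not_nonempty_iff.1 h), ν.empty'] at h₁
  exact zero_ne_one h₁

theorem density_le {ν : Capacity X} {F : Set X} {x : X} (hx : x ∈ F) :
    ν.density x ≤ ν.toFun F :=
  ν.mono' _ _ (singleton_subset_iff.2 hx)

theorem upperSemicontinuous_density [T1Space X] (ν : Capacity X) :
    UpperSemicontinuous ν.density := by
  intro x a ha
  obtain ⟨O, hO, hxO, hlt⟩ := ν.usc' {x} isClosed_singleton a ha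
  filter_upwards [hO.mem_nhds (hxO rfl)] with y hy
  exact hlt {y} (singleton_subset_iff.2 hy) isCompact_singleton

namespace IsCompletelyMaxitive

variable {ν : Capacity X} (hν : ν.IsCompletelyMaxitive)
include hν

theorem isPossibility : IsPossibility ν := by
  intro A B hA hB
  have h := hν {A, B} (by rintro C (rfl | rfl) <;> assumption)
    (by rw [sUnion_pair]; exact hA.union hB)
  rw [sUnion_pair, image_pair, csSup_pair] at h
  exact h

theorem apply_eq_sSup_density [T1Space X] {F : Set X} (hF : IsClosed F) :
    ν.toFun F = sSup (ν.density '' F) := by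
  have hU : ⋃₀ ((fun x => ({x} : Set X)) '' F) = F := by
    rw [sUnion_image, biUnion_of_singleton]
  have h := hν _ (by rintro _ ⟨x, -, rfl⟩; exact isClosed_singleton) (hU ▸ hF)
  rwa [hU, image_image] at h

theorem exists_density_eq [CompactSpace X] [T1Space X] {F : Set X} (hF : IsClosed F)
    (hne : F.Nonempty) : ∃ x ∈ F, ν.density x = ν.toFun F := by
  obtain ⟨x, hxF, hmax⟩ := UpperSemicontinuousOn.exists_isMaxOn hne hF.isCompact
    (ν.upperSemicontinuous_density.upperSemicontinuousOn F)
  have hgreatest : IsGreatest (ν.density '' F) (ν.density x) :=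
    ⟨mem_image_of_mem _ hxF, forall_mem_image.2 (isMaxOn_iff.1 hmax)⟩
  rw [hν.apply_eq_sSup_density hF, hgreatest.csSup_eq]
  exact ⟨x, hxF, rfl⟩

theorem exists_density_eq_one [CompactSpace X] [T1Space X] : ∃ x, ν.density x = 1 := by
  have := ν.nonempty
  obtain ⟨x, -, hx⟩ := hν.exists_density_eq isClosed_univ univ_nonempty
  exact ⟨x, hx.trans ν.univ'⟩

theorem eq_of_density_eq [T1Space X] {ν' : Capacity X} (hν' : ν'.IsCompletelyMaxitive)
    (h : ∀ x, ν'.density x = ν.density x) {F : Set X} (hF : IsClosed F) :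
    ν'.toFun F = ν.toFun F := by
  rw [hν'.apply_eq_sSup_density hF, hν.apply_eq_sSup_density hF, funext h]

end IsCompletelyMaxitive

noncomputable def ofDensity (f : X → ℝ) (hf : UpperSemicontinuous f)
    (hf01 : ∀ x, f x ∈ Icc (0 : ℝ) 1) (hf1 : ∃ x, f x = 1) : Capacity X where
  toFun A := sSup (f '' A)
  nonneg' _ := Real.sSup_nonneg (forall_mem_image.2 fun x _ => (hf01 x).1)
  le_one' _ := Real.sSup_le (forall_mem_image.2 fun x _ => (hf01 x).2) zero_le_one
  empty' := by rw [image_empty, Real.sSup_empty]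
  univ' := by
    obtain ⟨x, hx⟩ := hf1
    exact IsGreatest.csSup_eq
      ⟨⟨x, mem_univ x, hx⟩, forall_mem_image.2 fun y _ => (hf01 y).2⟩
  mono' _ _ :=
    sSup_image_mono_of_nonneg (fun x => (hf01 x).1) (bddAbove_Icc.mono (range_subset_iff.2 hf01))
  usc' F _ a ha :=
    ⟨f ⁻¹' Iio a, upperSemicontinuous_iff_isOpen_preimage.1 hf a,
      fun x hx => (le_csSup ((bddAbove_Icc.mono (range_subset_iff.2 hf01)).mono
        (image_subset_range f F)) ⟨x, hx, rfl⟩).trans_lt ha,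
      fun _ hBa hB => hf.sSup_image_lt_of_isCompact hB hBa
        ((Real.sSup_nonneg (forall_mem_image.2 fun x _ => (hf01 x).1)).trans_lt ha)⟩

theorem isCompletelyMaxitive_ofDensity (f : X → ℝ) (hf : UpperSemicontinuous f)
    (hf01 : ∀ x, f x ∈ Icc (0 : ℝ) 1) (hf1 : ∃ x, f x = 1) :
    (ofDensity f hf hf01 hf1).IsCompletelyMaxitive := fun 𝒜 _ _ =>
  sSup_image_sUnion_of_nonneg (fun x => (hf01 x).1)
    (bddAbove_Icc.mono (range_subset_iff.2 hf01)) 𝒜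

end Capacity

/-- Possibility capacities attain their value on closed sets at a point, are determined by
their (upper semicontinuous, normalized) density, and conversely every upper semicontinuous
`f : X → [0,1]` with `max f = 1` defines a possibility capacity `F ↦ max_{x∈F} f(x)`. -/
theorem possibility_density_theorem {X : Type*} [TopologicalSpace X] [CompactSpace X]
    [T2Space X] :
    (∀ ν : Capacity X,
      (∀ 𝒜 : Set (Set X), (∀ A ∈ 𝒜, IsClosed A) → IsClosed (⋃₀ 𝒜) →
        ν.toFun (⋃₀ 𝒜) = sSup (ν.toFun '' 𝒜)) →
      ((∀ F : Set X, IsClosed F → F.Nonempty →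
          ∃ x ∈ F, ν.toFun {x} = ν.toFun F ∧ ∀ y ∈ F, ν.toFun {y} ≤ ν.toFun F) ∧
       UpperSemicontinuous (fun x : X => ν.toFun {x}) ∧
       (∃ x : X, ν.toFun {x} = 1) ∧
       (∀ ν' : Capacity X,
          (∀ 𝒜 : Set (Set X), (∀ A ∈ 𝒜, IsClosed A) → IsClosed (⋃₀ 𝒜) →
            ν'.toFun (⋃₀ 𝒜) = sSup (ν'.toFun '' 𝒜)) →
          (∀ x : X, ν'.toFun {x} = ν.toFun {x}) →
          ∀ F : Set X, IsClosed F → ν'.toFun F = ν.toFun F))) ∧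
    (∀ f : X → ℝ, UpperSemicontinuous f → (∀ x, f x ∈ Set.Icc (0:ℝ) 1) → (∃ x, f x = 1) →
      ∃ ν : Capacity X, IsPossibility ν ∧
        (∀ F : Set X, IsClosed F → F.Nonempty → ν.toFun F = sSup (f '' F)) ∧
        (∀ 𝒜 : Set (Set X), (∀ A ∈ 𝒜, IsClosed A) → IsClosed (⋃₀ 𝒜) →
          ν.toFun (⋃₀ 𝒜) = sSup (ν.toFun '' 𝒜))) := by
  constructor
  · intro ν (hν : ν.IsCompletelyMaxitive)
    refine ⟨fun F hF hne => ?_, ν.upperSemicontinuous_density, hν.exists_density_eq_one,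
      fun ν' hν' h F hF => hν.eq_of_density_eq hν' h hF⟩
    obtain ⟨x, hxF, hx⟩ := hν.exists_density_eq hF hne
    exact ⟨x, hxF, hx, fun y hy => Capacity.density_le hy⟩
  · intro f hf hf01 hf1
    have hν := Capacity.isCompletelyMaxitive_ofDensity f hf hf01 hf1
    exact ⟨_, hν.isPossibility, fun _ _ _ => rfl, hν⟩
end

section
/- Let S be any index set. For any two disjoint compact B-convex subsets A, D of [0,1]^S (with the product topology), there exist closed B-convex subsets L₁, L₂ of [0,1]^S with L₁ ∪ L₂ = [0,1]^S, L₁ ∩ D = ∅, and L₂ ∩ A = ∅. In other words, the B-convexity on [0,1]^S restricted to closed sets is a normal (T₄) convexity. -/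
/-!
Kakutani's argument works for B-convexity because B-convexity has the Pasch property: if `p ∈ E`
lies in the hull of `C ∪ {z}` and `q ∈ C` lies in the hull of `E ∪ {z}`, then `C` and `E` meet,
as one checks on the explicit form `β • z ⊔ α • c` (with `β = 1` or `α = 1`) of these hulls. By
Zorn, two disjoint B-convex sets therefore extend to a B-convex set `C` with B-convex complement.
Compactness gives finitely many coordinates `F` and `ε > 0` such that the `(F, ε)`-thickenings of
`A` and `D` are still disjoint; they are B-convex because `(x, y) ↦ α • x ⊔ y` is `1`-Lipschitz in
each coordinate. Separating the two thickenings by such a `C`, the closures of `C` and `Cᶜ` avoid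
`D` and `A` respectively.
-/

open Set

/-- B-convexity in the cube `[0,1]^S`: closure under `(x, y, α) ↦ α·x ∨ y` coordinatewise. -/
def BCube {S : Type*} (C : Set (S → unitInterval)) : Prop :=
  ∀ x ∈ C, ∀ y ∈ C, ∀ α : unitInterval, (fun s => max (α * x s) (y s)) ∈ C

section

open scoped unitInterval Uniformity
open Filter UniformSpace

namespace unitInterval

variable {S : Type*}

protected lemma smul_sup (α : I) (x y : S → I) : α • (x ⊔ y) = α • x ⊔ α • y :=
  funext fun s => mul_max α (x s) (y s)

protected lemma sup_smul (α β : I) (x : S → I) : (α ⊔ β) • x = α • x ⊔ β • x :=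
  funext fun s => max_mul α β (x s)

lemma exists_mul_eq_of_le {β γ : I} (h : β ≤ γ) : ∃ t : I, t * γ = β := by
  rcases eq_or_ne γ 0 with rfl | hγ
  · exact ⟨0, by rw [le_antisymm h zero_le, mul_zero]⟩
  · refine ⟨⟨β / γ, div_mem β.2.1 γ.2.1 h⟩, Subtype.ext ?_⟩
    exact div_mul_cancel₀ _ (coe_ne_zero.2 hγ)

lemma dist_mul_max_le (α a b c d : I) :
    dist (max (α * a) b) (max (α * c) d) ≤ max (dist a c) (dist b d) := by
  simp only [Subtype.dist_eq, Real.dist_eq]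
  refine (abs_max_sub_max_le_max _ _ _ _).trans (max_le_max_right _ ?_)
  show |(α : ℝ) * a - α * c| ≤ _
  rw [← mul_sub, abs_mul, abs_of_nonneg α.2.1]
  exact mul_le_of_le_one_left (abs_nonneg _) α.2.2

end unitInterval

open unitInterval

variable {S : Type*} {A C D E : Set (S → I)}

lemma BCube.smul_sup_mem (hC : BCube C) {x y : S → I} (hx : x ∈ C) (hy : y ∈ C) (α : I) :
    α • x ⊔ y ∈ C :=
  hC x hx y hy α

lemma BCube.exists_smul_sup_smul_eq (hC : BCube C) {c c' : S → I} (hc : c ∈ C) (hc' : c' ∈ C)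
    (α α' : I) : ∃ c'' ∈ C, α • c ⊔ α' • c' = (α ⊔ α') • c'' := by
  wlog h : α' ≤ α generalizing α α' c c'
  · obtain ⟨c'', hc'', he⟩ := this hc' hc α' α (le_of_not_ge h)
    exact ⟨c'', hc'', by rw [sup_comm, he, sup_comm]⟩
  obtain ⟨t, ht⟩ := exists_mul_eq_of_le h
  refine ⟨t • c' ⊔ c, hC.smul_sup_mem hc' hc t, ?_⟩
  rw [sup_eq_left.2 h, unitInterval.smul_sup, smul_smul, mul_comm, ht, sup_comm]

/-- For a nonempty B-convex `C` this is the B-convex hull of `insert z C`. -/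
def insertHull (z : S → I) (C : Set (S → I)) : Set (S → I) :=
  {x | ∃ β α : I, (β = 1 ∨ α = 1) ∧ ∃ c ∈ C, x = β • z ⊔ α • c}

lemma subset_insertHull (z : S → I) : C ⊆ insertHull z C :=
  fun c hc => ⟨0, 1, Or.inr rfl, c, hc, by
    rw [zero_smul, one_smul, sup_eq_right.2 fun _ => zero_le]⟩

lemma mem_insertHull_self (z : S → I) (hC : C.Nonempty) : z ∈ insertHull z C :=
  let ⟨c, hc⟩ := hC
  ⟨1, 0, Or.inl rfl, c, hc, by
    rw [zero_smul, one_smul, sup_eq_left.2 fun _ => zero_le]⟩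

lemma bcube_insertHull (hC : BCube C) (z : S → I) : BCube (insertHull z C) := by
  rintro _ ⟨β, α, hβα, c, hc, rfl⟩ _ ⟨β', α', hβα', c', hc', rfl⟩ γ
  obtain ⟨c'', hc'', he⟩ := hC.exists_smul_sup_smul_eq hc hc' (γ * α) α'
  refine ⟨γ * β ⊔ β', γ * α ⊔ α', ?_, c'', hc'', ?_⟩
  · rcases hβα' with rfl | rfl
    exacts [Or.inl (sup_eq_right.2 le_one'), Or.inr (sup_eq_right.2 le_one')]
  · show γ • (β • z ⊔ α • c) ⊔ (β' • z ⊔ α' • c') = _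
    rw [← he, unitInterval.sup_smul, unitInterval.smul_sup, smul_smul, smul_smul]
    ac_rfl

theorem BCube.pasch (hC : BCube C) (hE : BCube E) {z p q : S → I}
    (hpC : p ∈ insertHull z C) (hpE : p ∈ E) (hqE : q ∈ insertHull z E) (hqC : q ∈ C) :
    ¬Disjoint C E := by
  obtain ⟨β, α, hβα, c, hc, rfl⟩ := hpC
  obtain ⟨γ, δ, hγδ, e, he, rfl⟩ := hqE
  wlog hβγ : β ≤ γ generalizing C E β α c γ δ e
  · exact fun h => this hE hC γ δ hγδ e he hqC β α hβα c hc hpE (le_of_not_ge hβγ) h.symm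
  rw [not_disjoint_iff]
  rcases hβα with rfl | rfl
  · obtain rfl : γ = 1 := le_antisymm le_one' hβγ
    refine ⟨α • c ⊔ (1 • z ⊔ δ • e), hC.smul_sup_mem hc hqC α, ?_⟩
    convert hE.smul_sup_mem he hpE δ using 1
    ac_rfl
  · obtain ⟨t, ht⟩ := exists_mul_eq_of_le hβγ
    refine ⟨t • (γ • z ⊔ δ • e) ⊔ c, hC.smul_sup_mem hqC hc t, ?_⟩
    convert hE.smul_sup_mem he hpE (t * δ) using 1
    rw [unitInterval.smul_sup, smul_smul, smul_smul, ht, one_smul]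
    ac_rfl

lemma BCube.sUnion_of_isChain {𝒞 : Set (Set (S → I))} (h𝒞 : ∀ C ∈ 𝒞, BCube C)
    (hchain : IsChain (· ⊆ ·) 𝒞) : BCube (⋃₀ 𝒞) := by
  rintro x ⟨C₁, h₁, hx⟩ y ⟨C₂, h₂, hy⟩ α
  obtain ⟨C, hC, h₁C, h₂C⟩ := hchain.directedOn C₁ h₁ C₂ h₂
  exact ⟨C, hC, h𝒞 C hC x (h₁C hx) y (h₂C hy) α⟩

lemma BCube.exists_maximal_disjoint (hA : BCube A) (hAD : Disjoint A D) :
    ∃ C, A ⊆ C ∧ Maximal (fun C => BCube C ∧ Disjoint C D) C :=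
  zorn_subset_nonempty {C | BCube C ∧ Disjoint C D}
    (fun 𝒞 h𝒞 hchain _ => ⟨⋃₀ 𝒞,
      ⟨BCube.sUnion_of_isChain (fun _ hC => (h𝒞 hC).1) hchain,
        disjoint_sUnion_left.2 fun _ hC => (h𝒞 hC).2⟩,
      fun _ => subset_sUnion_of_mem⟩)
    A ⟨hA, hAD⟩

lemma not_disjoint_insertHull_of_maximal (hC : Maximal (fun C => BCube C ∧ Disjoint C D) C)
    (hCne : C.Nonempty) {z : S → I} (hz : z ∉ C) : ¬Disjoint (insertHull z C) D :=
  fun h => hz <| hC.le_of_ge ⟨bcube_insertHull hC.prop.1 z, h⟩ (subset_insertHull z)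
    (mem_insertHull_self z hCne)

theorem BCube.exists_separating_halfspace (hA : BCube A) (hD : BCube D) (hAD : Disjoint A D) :
    ∃ C, BCube C ∧ BCube Cᶜ ∧ A ⊆ C ∧ D ⊆ Cᶜ := by
  rcases A.eq_empty_or_nonempty with rfl | hAne
  · exact ⟨∅, fun _ h => h.elim, fun _ _ _ _ _ h => h, subset_rfl, fun _ _ h => h⟩
  rcases D.eq_empty_or_nonempty with rfl | hDne
  · exact ⟨univ, fun _ _ _ _ _ => trivial, fun _ h => (h trivial).elim, subset_univ A,
      empty_subset _⟩
  obtain ⟨C, hAC, hC⟩ := hA.exists_maximal_disjoint hAD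
  obtain ⟨E, hDE, hE⟩ := hD.exists_maximal_disjoint hC.prop.2.symm
  have hcover : ∀ z, z ∈ C ∨ z ∈ E := by
    intro z
    by_contra! hz
    obtain ⟨p, hpC, hpD⟩ := not_disjoint_iff.1 <|
      not_disjoint_insertHull_of_maximal hC (hAne.mono hAC) hz.1
    obtain ⟨q, hqE, hqC⟩ := not_disjoint_iff.1 <|
      not_disjoint_insertHull_of_maximal hE (hDne.mono hDE) hz.2
    exact hC.prop.1.pasch hE.prop.1 hpC (hDE hpD) hqE hqC hE.prop.2.symm
  have hCE : Cᶜ = E :=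
    IsCompl.compl_eq ⟨hE.prop.2.symm, codisjoint_iff.2 (eq_univ_of_forall hcover)⟩
  exact ⟨C, hC.prop.1, hCE ▸ hE.prop.1, hAC, hCE ▸ hDE⟩

protected lemma BCube.closure (hC : BCube C) : BCube (closure C) := fun x hx y hy α =>
  map_mem_closure₂ (f := fun x y => α • x ⊔ y)
    (continuous_pi fun s =>
      show Continuous fun p : (S → I) × (S → I) => max (α * p.1 s) (p.2 s) by fun_prop)
    hx hy fun a ha b hb => hC a ha b hb α

def Pi.distEntourage {X : Type*} [PseudoMetricSpace X] (F : Set S) (ε : ℝ) :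
    SetRel (S → X) (S → X) :=
  {xy | ∀ s ∈ F, dist (xy.1 s) (xy.2 s) < ε}

theorem Pi.uniformity_basis_dist {X : Type*} [PseudoMetricSpace X] :
    (𝓤 (S → X)).HasBasis (fun Fε : Set S × ℝ => Fε.1.Finite ∧ 0 < Fε.2)
      (fun Fε => Pi.distEntourage Fε.1 Fε.2) := by
  have h : 𝓤 (S → X) = comap (fun xy s => (xy.1 s, xy.2 s)) (Filter.pi fun _ => 𝓤 X) := by
    simp_rw [Pi.uniformity, Filter.pi, Filter.comap_iInf, Filter.comap_comap]
    rfl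
  rw [h]
  exact Metric.uniformity_basis_dist.pi_self.comap _

lemma BCube.biUnion_ball (hA : BCube A) (F : Set S) (ε : ℝ) :
    BCube (⋃ a ∈ A, ball a (Pi.distEntourage F ε)) := by
  intro x hx y hy α
  simp only [mem_iUnion₂] at hx hy ⊢
  obtain ⟨a, ha, hxa⟩ := hx
  obtain ⟨a', ha', hya⟩ := hy
  exact ⟨_, hA a ha a' ha' α, fun s hs =>
    (dist_mul_max_le α _ _ _ _).trans_lt (max_lt (hxa s hs) (hya s hs))⟩

lemma Disjoint.closure_left_of_uniform_thickening {X : Type*} [UniformSpace X] {C D : Set X}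
    {V : SetRel X X} (hV : V ∈ 𝓤 X) (h : Disjoint C (⋃ d ∈ D, ball d V)) :
    Disjoint (closure C) D :=
  disjoint_principal_nhdsSet.1 <| Filter.disjoint_of_disjoint_of_mem h (mem_principal_self C)
    (bUnion_mem_nhdsSet fun d _ => ball_mem_nhds d hV)

end

/-- Normality (T₄) of the B-convexity on `[0,1]^S`: disjoint compact B-convex sets are
screened by two closed B-convex sets covering the cube. -/
theorem bconvex_cube_normal {S : Type*} (A D : Set (S → unitInterval))
    (hAc : IsCompact A) (hA : BCube A) (hDc : IsCompact D) (hD : BCube D)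
    (hdisj : Disjoint A D) :
    ∃ L₁ L₂ : Set (S → unitInterval), IsClosed L₁ ∧ IsClosed L₂ ∧ BCube L₁ ∧ BCube L₂ ∧
      L₁ ∪ L₂ = Set.univ ∧ Disjoint L₁ D ∧ Disjoint L₂ A := by
  obtain ⟨⟨F, ε⟩, hFε, hAD⟩ :=
    hdisj.exists_uniform_thickening_of_basis Pi.uniformity_basis_dist hAc hDc.isClosed
  obtain ⟨C, hC, hCc, hAC, hDC⟩ :=
    (hA.biUnion_ball F ε).exists_separating_halfspace (hD.biUnion_ball F ε) hAD
  refine ⟨closure C, closure Cᶜ, isClosed_closure, isClosed_closure, hC.closure, hCc.closure,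
    eq_univ_of_subset (union_subset_union subset_closure subset_closure) (union_compl_self C),
    ?_, ?_⟩
  · exact (disjoint_compl_right.mono_right hDC).closure_left_of_uniform_thickening
      (Pi.uniformity_basis_dist.mem_of_mem hFε)
  · exact (disjoint_compl_left.mono_right hAC).closure_left_of_uniform_thickening
      (Pi.uniformity_basis_dist.mem_of_mem hFε)
end

section
/- Let X be a compact Hausdorff space. The family C_X of closed B-convex subsets of M_∪X (the space of possibility capacities on X) is a normal convexity: for any two disjoint sets A, D ∈ C_X there exist S₁, S₂ ∈ C_X with S₁ ∪ S₂ = M_∪X, A ∩ S₂ = ∅, and D ∩ S₁ = ∅. -/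
open Set

/-- Extension of a capacity to (open) sets: `ν(U) = sup{ν(K) : K closed, K ⊆ U}`. -/
noncomputable def capOpen {X : Type*} [TopologicalSpace X] (ν : Capacity X) (U : Set X) : ℝ :=
  sSup (ν.toFun '' {K : Set X | IsClosed K ∧ K ⊆ U})

/-- The topology on the space of capacities, generated by the subbasis
`O₋(F,a) = {ν : ν(F) < a}` (`F` closed) and `O₊(U,a) = {ν : ν(U) > a}` (`U` open). -/
instance capacityTop (X : Type*) [TopologicalSpace X] : TopologicalSpace (Capacity X) :=
  TopologicalSpace.generateFrom
    {S : Set (Capacity X) |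
      (∃ F : Set X, ∃ a : ℝ, IsClosed F ∧ S = {ν : Capacity X | ν.toFun F < a}) ∨
      (∃ U : Set X, ∃ a : ℝ, IsOpen U ∧ S = {ν : Capacity X | a < capOpen ν U})}

/-- The space `M_∪X` of possibility capacities on `X`. -/
abbrev PosCap (X : Type*) [TopologicalSpace X] := {ν : Capacity X // IsPossibility ν}

/-- B-convexity in `M_∪X`: a set is B-convex if together with `ν, μ` it contains every
possibility capacity that agrees on closed sets with `A ↦ s·ν(A) ∨ μ(A)`, for all `s ∈ [0,1]`. -/
def BConvexP {X : Type*} [TopologicalSpace X] (C : Set (PosCap X)) : Prop :=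
  ∀ ν ∈ C, ∀ μ ∈ C, ∀ s ∈ Set.Icc (0:ℝ) 1, ∀ κ : PosCap X,
    (∀ A : Set X, IsClosed A →
      κ.1.toFun A = max (s * ν.1.toFun A) (μ.1.toFun A)) → κ ∈ C

/-!
`M_∪X` is compact, and a thickening of a set `S ⊆ M_∪X` (the capacities that are `δ`-close to
some `ν ∈ S` on finitely many test sets) is a B-convex neighbourhood of `S`. Some thickenings of
`A` and `D` are disjoint: otherwise, by compactness of `A × D`, pairs in `A × D` with meeting
thickenings would accumulate at some `(ν, μ)` with `ν = μ` on closed sets, so that `ν ∈ A ∩ D`.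
Kakutani's argument (Zorn's lemma and Pasch's axiom for B-segments) extends the two thickenings
to a B-convex set `P` with B-convex complement. Closures of B-convex sets are B-convex, the join
being continuous, and `closure P`, `closure Pᶜ` screen `A` from `D` because `A` and `D` lie in
the interiors of their thickenings.
-/

open Filter Topology

section

variable {X : Type*} [TopologicalSpace X]

section CapOpen

variable (ν : Capacity X) (U : Set X)

lemma capOpen_bddAbove : BddAbove (ν.toFun '' {K | IsClosed K ∧ K ⊆ U}) :=
  ⟨1, by rintro _ ⟨K, -, rfl⟩; exact ν.le_one' K⟩

lemma capOpen_nonneg : 0 ≤ capOpen ν U :=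
  Real.sSup_nonneg (by rintro _ ⟨K, -, rfl⟩; exact ν.nonneg' K)

lemma capOpen_le_one : capOpen ν U ≤ 1 :=
  Real.sSup_le (by rintro _ ⟨K, -, rfl⟩; exact ν.le_one' K) zero_le_one

variable {ν U}

lemma toFun_le_capOpen {K : Set X} (hK : IsClosed K) (hKU : K ⊆ U) : ν.toFun K ≤ capOpen ν U :=
  le_csSup (capOpen_bddAbove ν U) ⟨K, ⟨hK, hKU⟩, rfl⟩

lemma capOpen_le {c : ℝ} (hc : 0 ≤ c) (h : ∀ K, IsClosed K → K ⊆ U → ν.toFun K ≤ c) :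
    capOpen ν U ≤ c :=
  Real.sSup_le (by rintro _ ⟨K, ⟨hK, hKU⟩, rfl⟩; exact h K hK hKU) hc

lemma capOpen_le_toFun_closure : capOpen ν U ≤ ν.toFun (closure U) :=
  capOpen_le (ν.nonneg' _) fun _ _ hKU => ν.mono' _ _ (hKU.trans subset_closure)

lemma capOpen_congr {ν' : Capacity X} (h : ∀ F, IsClosed F → ν.toFun F = ν'.toFun F) :
    capOpen ν U = capOpen ν' U := by
  unfold capOpen
  congr 1
  exact Set.image_congr fun K hK => h K hK.1

end CapOpen

namespace Capacity

def join (s : ℝ) (hs : s ∈ Set.Icc (0 : ℝ) 1) (ν μ : Capacity X) : Capacity X where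
  toFun B := max (s * ν.toFun B) (μ.toFun B)
  nonneg' B := le_max_of_le_right (μ.nonneg' B)
  le_one' B := max_le (mul_le_one₀ hs.2 (ν.nonneg' B) (ν.le_one' B)) (μ.le_one' B)
  empty' := by simp [ν.empty', μ.empty']
  univ' := by simp [ν.univ', μ.univ', hs.2]
  mono' A B hAB := max_le_max (mul_le_mul_of_nonneg_left (ν.mono' A B hAB) hs.1) (μ.mono' A B hAB)
  usc' F hF a ha := by
    have hμ : μ.toFun F < a := (le_max_right _ _).trans_lt ha
    obtain ⟨O₂, hO₂, hFO₂, hμO₂⟩ := μ.usc' F hF a hμ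
    rcases hs.1.eq_or_lt with rfl | hs₀
    · refine ⟨O₂, hO₂, hFO₂, fun B hB hBc => max_lt ?_ (hμO₂ B hB hBc)⟩
      simpa using (μ.nonneg' F).trans_lt hμ
    · have hν : ν.toFun F < a / s := by
        rw [lt_div_iff₀ hs₀, mul_comm]; exact (le_max_left _ _).trans_lt ha
      obtain ⟨O₁, hO₁, hFO₁, hνO₁⟩ := ν.usc' F hF _ hν
      refine ⟨O₁ ∩ O₂, hO₁.inter hO₂, subset_inter hFO₁ hFO₂, fun B hB hBc => max_lt ?_ ?_⟩
      · have := hνO₁ B (hB.trans inter_subset_left) hBc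
        rwa [lt_div_iff₀ hs₀, mul_comm] at this
      · exact hμO₂ B (hB.trans inter_subset_right) hBc

end Capacity

namespace PosCap

def join (s : ℝ) (hs : s ∈ Set.Icc (0 : ℝ) 1) (ν μ : PosCap X) : PosCap X :=
  ⟨Capacity.join s hs ν.1 μ.1, fun A B hA hB => by
    simp only [Capacity.join, ν.2 A B hA hB, μ.2 A B hA hB, mul_max_of_nonneg _ _ hs.1,
      max_max_max_comm]⟩

lemma join_toFun (s : ℝ) (hs : s ∈ Set.Icc (0 : ℝ) 1) (ν μ : PosCap X) (B : Set X) :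
    (join s hs ν μ).1.toFun B = max (s * ν.1.toFun B) (μ.1.toFun B) := rfl

lemma capOpen_join (s : ℝ) (hs : s ∈ Set.Icc (0 : ℝ) 1) (ν μ : PosCap X) (U : Set X) :
    capOpen (join s hs ν μ).1 U = max (s * capOpen ν.1 U) (capOpen μ.1 U) := by
  refine le_antisymm ?_ (max_le ?_ ?_)
  · exact capOpen_le ((capOpen_nonneg _ _).trans (le_max_right _ _)) fun K hK hKU =>
      max_le_max (mul_le_mul_of_nonneg_left (toFun_le_capOpen hK hKU) hs.1)
        (toFun_le_capOpen hK hKU)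
  · rcases hs.1.eq_or_lt with rfl | hs₀
    · simpa using capOpen_nonneg _ _
    · rw [← le_div_iff₀' hs₀]
      refine capOpen_le (div_nonneg (capOpen_nonneg _ _) hs₀.le) fun K hK hKU => ?_
      rw [le_div_iff₀' hs₀]
      exact (le_max_left _ _).trans (toFun_le_capOpen (ν := (join s hs ν μ).1) hK hKU)
  · exact capOpen_le (capOpen_nonneg _ _) fun K hK hKU =>
      (le_max_right _ _).trans (toFun_le_capOpen (ν := (join s hs ν μ).1) hK hKU)

end PosCap

namespace BConvexP

variable {C : Set (PosCap X)}

lemma join_mem (hC : BConvexP C) {ν μ : PosCap X} (hν : ν ∈ C) (hμ : μ ∈ C) {s : ℝ}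
    (hs : s ∈ Set.Icc (0 : ℝ) 1) : PosCap.join s hs ν μ ∈ C :=
  hC ν hν μ hμ s hs _ fun _ _ => rfl

lemma mem_of_agree (hC : BConvexP C) {ν κ : PosCap X} (hν : ν ∈ C)
    (h : ∀ F, IsClosed F → κ.1.toFun F = ν.1.toFun F) : κ ∈ C :=
  hC ν hν ν hν 1 (Set.right_mem_Icc.2 zero_le_one) κ fun F hF => by simp [h F hF]

lemma _root_.bconvexP_univ : BConvexP (Set.univ : Set (PosCap X)) :=
  fun _ _ _ _ _ _ κ _ => Set.mem_univ κ

lemma _root_.bconvexP_empty : BConvexP (∅ : Set (PosCap X)) :=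
  fun _ h => absurd h (Set.notMem_empty _)

lemma sUnion {S : Set (Set (PosCap X))} (hS : IsChain (· ⊆ ·) S) (h : ∀ C ∈ S, BConvexP C) :
    BConvexP (⋃₀ S) := by
  rintro ν ⟨C₁, hC₁, hν⟩ μ ⟨C₂, hC₂, hμ⟩ s hs κ hκ
  rcases hS.total hC₁ hC₂ with h₁₂ | h₂₁
  · exact ⟨C₂, hC₂, h C₂ hC₂ ν (h₁₂ hν) μ hμ s hs κ hκ⟩
  · exact ⟨C₁, hC₁, h C₁ hC₁ ν hν μ (h₂₁ hμ) s hs κ hκ⟩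

end BConvexP

lemma IsChain.disjoint_sUnion_fst_snd {α : Type*} {c : Set (Set α × Set α)}
    (hc : IsChain (· ≤ ·) c) (h : ∀ z ∈ c, Disjoint z.1 z.2) :
    Disjoint (⋃₀ (Prod.fst '' c)) (⋃₀ (Prod.snd '' c)) := by
  simp only [Set.disjoint_left, mem_sUnion, mem_image]
  rintro κ ⟨_, ⟨z₁, hz₁, rfl⟩, h₁⟩ ⟨_, ⟨z₂, hz₂, rfl⟩, h₂⟩
  rcases hc.total hz₁ hz₂ with h₁₂ | h₂₁
  · exact Set.disjoint_left.1 (h z₂ hz₂) (h₁₂.1 h₁) h₂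
  · exact Set.disjoint_left.1 (h z₁ hz₁) h₁ (h₂₁.2 h₂)

lemma exists_mem_Icc_eq_mul {u t : ℝ} (hu : 0 ≤ u) (hut : u ≤ t) :
    ∃ s ∈ Set.Icc (0 : ℝ) 1, u = s * t :=
  ⟨u / t, ⟨div_nonneg hu (hu.trans hut), div_le_one_of_le₀ hut (hu.trans hut)⟩,
    (div_mul_cancel_of_imp fun ht => le_antisymm (ht ▸ hut) hu).symm⟩

namespace PosCap

/-- The B-segment `[ν, μ]`: capacities force `max t σ = 1`. -/
def segment (ν μ : PosCap X) : Set (PosCap X) :=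
  {κ | ∃ t ∈ Set.Icc (0 : ℝ) 1, ∃ σ ∈ Set.Icc (0 : ℝ) 1,
    ∀ F, IsClosed F → κ.1.toFun F = max (t * ν.1.toFun F) (σ * μ.1.toFun F)}

lemma segment_comm (ν μ : PosCap X) : segment ν μ = segment μ ν := by
  ext κ
  constructor <;> rintro ⟨t, ht, σ, hσ, h⟩ <;>
    exact ⟨σ, hσ, t, ht, fun F hF => by rw [h F hF, max_comm]⟩

lemma left_mem_segment (ν μ : PosCap X) : ν ∈ segment ν μ :=
  ⟨1, Set.right_mem_Icc.2 zero_le_one, 0, Set.left_mem_Icc.2 zero_le_one, fun F _ => by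
    simp [ν.1.nonneg' F]⟩

lemma right_mem_segment (ν μ : PosCap X) : μ ∈ segment ν μ :=
  segment_comm μ ν ▸ left_mem_segment μ ν

lemma segment_inter_nonempty_of_le {x c d p q : PosCap X} {t σ u τ : ℝ}
    (hσ : σ ∈ Set.Icc (0 : ℝ) 1) (hu : u ∈ Set.Icc (0 : ℝ) 1) (hτ : τ ∈ Set.Icc (0 : ℝ) 1)
    (hq : ∀ F, IsClosed F → q.1.toFun F = max (t * x.1.toFun F) (σ * c.1.toFun F))
    (hp : ∀ F, IsClosed F → p.1.toFun F = max (u * x.1.toFun F) (τ * d.1.toFun F))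
    (hut : u ≤ t) : (segment c p ∩ segment q d).Nonempty := by
  obtain ⟨s, hs, rfl⟩ := exists_mem_Icc_eq_mul hu.1 hut
  -- `s·q ∨ p` is `sσ·c ∨ p` and `s·q ∨ τ·d`, since `st·x` occurs in both `s·q` and `p`.
  refine ⟨join s hs q p, ⟨s * σ, ⟨mul_nonneg hs.1 hσ.1, mul_le_one₀ hs.2 hσ.1 hσ.2⟩, 1,
    Set.right_mem_Icc.2 zero_le_one, fun F hF => ?_⟩, ⟨s, hs, τ, hτ, fun F hF => ?_⟩⟩
  · rw [join_toFun, hq F hF, hp F hF, mul_max_of_nonneg _ _ hs.1, one_mul, ← mul_assoc,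
      ← mul_assoc, max_comm (s * t * _), max_assoc, ← max_assoc (s * t * _), max_self]
  · have hx : s * t * x.1.toFun F ≤ s * q.1.toFun F := by
      rw [mul_assoc, hq F hF]
      exact mul_le_mul_of_nonneg_left (le_max_left _ _) hs.1
    rw [join_toFun, hp F hF, ← max_assoc, max_eq_left hx]

/-- Pasch's axiom for B-segments. -/
lemma segment_inter_nonempty {x c d p q : PosCap X} (hq : q ∈ segment x c)
    (hp : p ∈ segment x d) : (segment c p ∩ segment q d).Nonempty := by
  obtain ⟨t, ht, σ, hσ, hq⟩ := hq
  obtain ⟨u, hu, τ, hτ, hp⟩ := hp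
  rcases le_total u t with hut | htu
  · exact segment_inter_nonempty_of_le hσ hu hτ hq hp hut
  · obtain ⟨z, hz₁, hz₂⟩ := segment_inter_nonempty_of_le hτ ht hσ hp hq htu
    rw [segment_comm] at hz₁ hz₂
    exact ⟨z, hz₂, hz₁⟩

end PosCap

namespace BConvexP

variable {C : Set (PosCap X)}

/-- Since capacities take the value `1` on `X`, one of the two coefficients is `1`. -/
lemma segment_subset (hC : BConvexP C) {ν μ : PosCap X} (hν : ν ∈ C) (hμ : μ ∈ C) :
    PosCap.segment ν μ ⊆ C := by
  rintro κ ⟨t, ht, σ, hσ, h⟩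
  have htσ : max t σ = 1 := by
    simpa [κ.1.univ', ν.1.univ', μ.1.univ'] using (h _ isClosed_univ).symm
  rcases max_choice t σ with h₁ | h₁ <;> rw [h₁] at htσ <;> subst htσ
  · exact hC μ hμ ν hν σ hσ κ fun F hF => by rw [h F hF, one_mul, max_comm]
  · exact hC ν hν μ hμ t ht κ fun F hF => by rw [h F hF, one_mul]

lemma exists_max_mul_eq_mul (hC : BConvexP C) {c₁ c₂ : PosCap X} (h₁ : c₁ ∈ C) (h₂ : c₂ ∈ C)
    {σ₁ σ₂ : ℝ} (hσ₁ : σ₁ ∈ Set.Icc (0 : ℝ) 1) (hσ₂ : σ₂ ∈ Set.Icc (0 : ℝ) 1) :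
    ∃ c ∈ C, ∃ σ ∈ Set.Icc (0 : ℝ) 1, ∀ F, IsClosed F →
      max (σ₁ * c₁.1.toFun F) (σ₂ * c₂.1.toFun F) = σ * c.1.toFun F := by
  wlog h : σ₁ ≤ σ₂ generalizing c₁ c₂ σ₁ σ₂
  · obtain ⟨c, hc, σ, hσ, hmax⟩ := this h₂ h₁ hσ₂ hσ₁ (le_of_not_ge h)
    exact ⟨c, hc, σ, hσ, fun F hF => by rw [max_comm, hmax F hF]⟩
  obtain ⟨s, hs, rfl⟩ := exists_mem_Icc_eq_mul hσ₁.1 h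
  refine ⟨PosCap.join s hs c₁ c₂, hC.join_mem h₁ h₂ hs, σ₂, hσ₂, fun F _ => ?_⟩
  rw [PosCap.join_toFun, mul_max_of_nonneg _ _ hσ₂.1, ← mul_assoc, mul_comm σ₂ s]

lemma biUnion_segment (hC : BConvexP C) (x : PosCap X) :
    BConvexP (⋃ c ∈ C, PosCap.segment x c) := by
  simp only [BConvexP, mem_iUnion]
  rintro κ₁ ⟨c₁, hc₁, t₁, ht₁, σ₁, hσ₁, hκ₁⟩ κ₂ ⟨c₂, hc₂, t₂, ht₂, σ₂, hσ₂, hκ₂⟩ s hs κ hκ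
  obtain ⟨c, hc, σ, hσ, hmax⟩ := hC.exists_max_mul_eq_mul hc₁ hc₂
    ⟨mul_nonneg hs.1 hσ₁.1, mul_le_one₀ hs.2 hσ₁.1 hσ₁.2⟩ hσ₂
  refine ⟨c, hc, max (s * t₁) t₂, ⟨ht₂.1.trans (le_max_right _ _),
    max_le (mul_le_one₀ hs.2 ht₁.1 ht₁.2) ht₂.2⟩, σ, hσ, fun F hF => ?_⟩
  rw [hκ F hF, hκ₁ F hF, hκ₂ F hF, mul_max_of_nonneg _ _ hs.1, max_max_max_comm,
    max_mul_of_nonneg _ _ (x.1.nonneg' F), ← hmax F hF, mul_assoc, mul_assoc]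

lemma not_disjoint_biUnion_segment {P Q : Set (PosCap X)} (hP : BConvexP P) (hPne : P.Nonempty)
    (hmax : ∀ P', BConvexP P' → Disjoint P' Q → P ⊆ P' → P' ⊆ P) {x : PosCap X} (hx : x ∉ P) :
    ¬Disjoint (⋃ c ∈ P, PosCap.segment x c) Q := fun h =>
  hx <| hmax _ (hP.biUnion_segment x) h
    (fun c hc => mem_biUnion hc (PosCap.right_mem_segment x c))
    (mem_biUnion hPne.some_mem (PosCap.left_mem_segment x _))

end BConvexP

def bconvexPairs (X : Type*) [TopologicalSpace X] : Set (Set (PosCap X) × Set (PosCap X)) :=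
  {z | BConvexP z.1 ∧ BConvexP z.2 ∧ Disjoint z.1 z.2}

lemma exists_ub_bconvexPairs {c : Set (Set (PosCap X) × Set (PosCap X))}
    (hcS : c ⊆ bconvexPairs X) (hc : IsChain (· ≤ ·) c) :
    ∃ ub ∈ bconvexPairs X, ∀ z ∈ c, z ≤ ub := by
  refine ⟨(⋃₀ (Prod.fst '' c), ⋃₀ (Prod.snd '' c)), ⟨?_, ?_, ?_⟩,
    fun z hz => ⟨subset_sUnion_of_mem ⟨z, hz, rfl⟩, subset_sUnion_of_mem ⟨z, hz, rfl⟩⟩⟩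
  · refine BConvexP.sUnion (hc.image_of_map_rel _ _ _ fun _ _ h => h.1) ?_
    rintro _ ⟨z, hz, rfl⟩
    exact (hcS hz).1
  · refine BConvexP.sUnion (hc.image_of_map_rel _ _ _ fun _ _ h => h.2) ?_
    rintro _ ⟨z, hz, rfl⟩
    exact (hcS hz).2.1
  · exact hc.disjoint_sUnion_fst_snd fun z hz => (hcS hz).2.2

lemma union_eq_univ_of_maximal {P Q : Set (PosCap X)} (hm : Maximal (· ∈ bconvexPairs X) (P, Q))
    (hPne : P.Nonempty) (hQne : Q.Nonempty) : P ∪ Q = univ := by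
  obtain ⟨⟨hP, hQ, hPQ⟩, hmax⟩ := hm
  refine eq_univ_of_forall fun x => by_contra fun hx => ?_
  rw [mem_union, not_or] at hx
  obtain ⟨q, hq, hqQ⟩ := not_disjoint_iff.1 <| hP.not_disjoint_biUnion_segment hPne
    (fun P' hP' hP'Q hPP' => (hmax (y := (P', Q)) ⟨hP', hQ, hP'Q⟩ ⟨hPP', subset_rfl⟩).1) hx.1
  obtain ⟨p, hp, hpP⟩ := not_disjoint_iff.1 <| hQ.not_disjoint_biUnion_segment hQne
    (fun Q' hQ' hQ'P hQQ' => (hmax (y := (P, Q')) ⟨hP, hQ', hQ'P.symm⟩ ⟨subset_rfl, hQQ'⟩).2)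
    hx.2
  simp only [mem_iUnion] at hp hq
  obtain ⟨c, hc, hq⟩ := hq
  obtain ⟨d, hd, hp⟩ := hp
  obtain ⟨z, hzP, hzQ⟩ := PosCap.segment_inter_nonempty hq hp
  exact disjoint_left.1 hPQ (hP.segment_subset hc hpP hzP) (hQ.segment_subset hqQ hd hzQ)

/-- Kakutani's lemma for B-convexity. -/
lemma exists_halfspace_of_disjoint {A D : Set (PosCap X)} (hA : BConvexP A) (hD : BConvexP D)
    (hAD : Disjoint A D) : ∃ P, BConvexP P ∧ BConvexP Pᶜ ∧ A ⊆ P ∧ D ⊆ Pᶜ := by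
  rcases A.eq_empty_or_nonempty with rfl | hAne
  · exact ⟨∅, bconvexP_empty, by simpa using bconvexP_univ, empty_subset _, by simp⟩
  rcases D.eq_empty_or_nonempty with rfl | hDne
  · exact ⟨univ, bconvexP_univ, by simpa using bconvexP_empty, subset_univ _, empty_subset _⟩
  obtain ⟨⟨P, Q⟩, ⟨hAP, hDQ⟩, hm⟩ := zorn_le_nonempty₀ (bconvexPairs X)
    (fun _ hcS hc _ _ => exists_ub_bconvexPairs hcS hc) (A, D) ⟨hA, hD, hAD⟩
  obtain rfl : Q = Pᶜ := (compl_unique hm.1.2.2.eq_bot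
    (union_eq_univ_of_maximal hm (hAne.mono hAP) (hDne.mono hDQ))).symm
  exact ⟨P, hm.1.1, hm.1.2.1, hAP, hDQ⟩


namespace PosCap

lemma isOpen_setOf_toFun_lt {F : Set X} (hF : IsClosed F) (a : ℝ) :
    IsOpen {κ : PosCap X | κ.1.toFun F < a} :=
  have : IsOpen {ν : Capacity X | ν.toFun F < a} :=
    TopologicalSpace.isOpen_generateFrom_of_mem (Or.inl ⟨F, a, hF, rfl⟩)
  this.preimage continuous_subtype_val

lemma isOpen_setOf_lt_capOpen {U : Set X} (hU : IsOpen U) (b : ℝ) :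
    IsOpen {κ : PosCap X | b < capOpen κ.1 U} :=
  have : IsOpen {ν : Capacity X | b < capOpen ν U} :=
    TopologicalSpace.isOpen_generateFrom_of_mem (Or.inr ⟨U, b, hU, rfl⟩)
  this.preimage continuous_subtype_val

lemma upperSemicontinuous_toFun {F : Set X} (hF : IsClosed F) :
    UpperSemicontinuous fun κ : PosCap X => κ.1.toFun F :=
  fun _ a h => (isOpen_setOf_toFun_lt hF a).mem_nhds h

lemma lowerSemicontinuous_capOpen {U : Set X} (hU : IsOpen U) :
    LowerSemicontinuous fun κ : PosCap X => capOpen κ.1 U :=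
  fun _ b h => (isOpen_setOf_lt_capOpen hU b).mem_nhds h

lemma tendsto_nhds {α : Type*} {l : Filter α} {m : α → PosCap X} {κ : PosCap X}
    (hF : ∀ F, IsClosed F → ∀ a, κ.1.toFun F < a → ∀ᶠ y in l, (m y).1.toFun F < a)
    (hU : ∀ U, IsOpen U → ∀ b, b < capOpen κ.1 U → ∀ᶠ y in l, b < capOpen (m y).1 U) :
    Tendsto m l (𝓝 κ) := by
  refine tendsto_subtype_rng.2 (TopologicalSpace.tendsto_nhds_generateFrom_iff.2 ?_)
  rintro _ (⟨F, a, hF', rfl⟩ | ⟨U, b, hU', rfl⟩) hκ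
  exacts [hF F hF' a hκ, hU U hU' b hκ]

lemma continuous_of_semicontinuous {Y : Type*} [TopologicalSpace Y] {f : Y → PosCap X}
    (hF : ∀ F, IsClosed F → UpperSemicontinuous fun y => (f y).1.toFun F)
    (hU : ∀ U, IsOpen U → LowerSemicontinuous fun y => capOpen (f y).1 U) : Continuous f :=
  continuous_iff_continuousAt.2 fun y =>
    tendsto_nhds (fun F hF' => hF F hF' y) (fun U hU' => hU U hU' y)

lemma specializes_of_agree {ν κ : PosCap X}
    (h : ∀ F, IsClosed F → ν.1.toFun F = κ.1.toFun F) : ν ⤳ κ :=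
  tendsto_nhds
    (fun F hF a ha => upperSemicontinuous_toFun hF ν a ((h F hF).trans_lt ha))
    (fun _ hU b hb => lowerSemicontinuous_capOpen hU ν b (hb.trans_eq (capOpen_congr h).symm))

lemma continuous_join (s : ℝ) (hs : s ∈ Set.Icc (0 : ℝ) 1) :
    Continuous fun p : PosCap X × PosCap X => join s hs p.1 p.2 := by
  refine continuous_of_semicontinuous (fun F hF => ?_) (fun U hU => ?_)
  · refine UpperSemicontinuous.sup ?_ ((upperSemicontinuous_toFun hF).comp continuous_snd)
    exact (continuous_const_mul s).comp_upperSemicontinuous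
      ((upperSemicontinuous_toFun hF).comp continuous_fst) (monotone_mul_left_of_nonneg hs.1)
  · simp only [capOpen_join]
    refine LowerSemicontinuous.sup ?_ ((lowerSemicontinuous_capOpen hU).comp continuous_snd)
    exact (continuous_const_mul s).comp_lowerSemicontinuous
      ((lowerSemicontinuous_capOpen hU).comp continuous_fst) (monotone_mul_left_of_nonneg hs.1)

end PosCap

lemma BConvexP.closure {C : Set (PosCap X)} (hC : BConvexP C) : BConvexP (_root_.closure C) := by
  intro ν hν μ hμ s hs κ hκ
  have hjoin : PosCap.join s hs ν μ ∈ _root_.closure C :=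
    map_mem_closure₂ (PosCap.continuous_join s hs) hν hμ fun _ h₁ _ h₂ => hC.join_mem h₁ h₂ hs
  exact (PosCap.specializes_of_agree fun F hF => (hκ F hF).symm).mem_closed isClosed_closure hjoin

namespace PosCap

lemma toFun_biUnion_lt (κ : PosCap X) {ι : Type*} (t : Finset ι) {C : ι → Set X}
    (hC : ∀ i ∈ t, IsClosed (C i)) {a : ℝ} (ha : 0 < a) (h : ∀ i ∈ t, κ.1.toFun (C i) < a) :
    κ.1.toFun (⋃ i ∈ t, C i) < a := by
  classical
  induction t using Finset.induction_on with
  | empty => simpa [κ.1.empty'] using ha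
  | insert j t _ ih =>
    simp only [Finset.mem_insert, forall_eq_or_imp] at hC h
    rw [Finset.set_biUnion_insert, κ.2 _ _ hC.1 (isClosed_biUnion_finset hC.2)]
    exact max_lt h.1 (ih hC.2 h.2)

/-- The shrinking lemma cuts `F` into finitely many closed pieces, one inside each `U i`. -/
lemma toFun_lt_of_subset_biUnion [NormalSpace X] (κ : PosCap X) {F : Set X} (hF : IsClosed F)
    {ι : Type*} (t : Finset ι) {U : ι → Set X} (hU : ∀ i ∈ t, IsOpen (U i))
    (hFU : F ⊆ ⋃ i ∈ t, U i) {a : ℝ} (ha : 0 < a) (h : ∀ i ∈ t, capOpen κ.1 (U i) < a) :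
    κ.1.toFun F < a := by
  obtain ⟨v, hFv, -, hvU⟩ := exists_subset_iUnion_closure_subset (u := fun i : t => U i) hF
    (fun i => hU i i.2) (fun _ _ => Set.toFinite _) (by simpa [Set.iUnion_subtype] using hFU)
  have hsplit : F ⊆ ⋃ i ∈ (Finset.univ : Finset t), F ∩ _root_.closure (v i) := fun x hx => by
    obtain ⟨i, hi⟩ := Set.mem_iUnion.1 (hFv hx)
    exact Set.mem_biUnion (Finset.mem_univ i) ⟨hx, subset_closure hi⟩
  refine (κ.1.mono' _ _ hsplit).trans_lt (toFun_biUnion_lt κ _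
    (fun i _ => hF.inter isClosed_closure) ha fun i _ => ?_)
  exact (toFun_le_capOpen (hF.inter isClosed_closure) (inter_subset_right.trans (hvU i))).trans_lt
    (h i i.2)

end PosCap

section SupImage

variable {α : Type*} {g : α → ℝ}

lemma bddAbove_image_of_le_one (hg₁ : ∀ x, g x ≤ 1) (B : Set α) : BddAbove (g '' B) :=
  ⟨1, by rintro _ ⟨x, -, rfl⟩; exact hg₁ x⟩

lemma sSup_image_nonneg (hg₀ : ∀ x, 0 ≤ g x) (B : Set α) : 0 ≤ sSup (g '' B) :=
  Real.sSup_nonneg (by rintro _ ⟨x, -, rfl⟩; exact hg₀ x)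

lemma sSup_image_mono (hg₀ : ∀ x, 0 ≤ g x) (hg₁ : ∀ x, g x ≤ 1) {A B : Set α} (hAB : A ⊆ B) :
    sSup (g '' A) ≤ sSup (g '' B) := by
  refine Real.sSup_le ?_ (sSup_image_nonneg hg₀ B)
  rintro _ ⟨x, hx, rfl⟩
  exact le_csSup (bddAbove_image_of_le_one hg₁ B) ⟨x, hAB hx, rfl⟩

lemma sSup_image_union (hg₀ : ∀ x, 0 ≤ g x) (hg₁ : ∀ x, g x ≤ 1) (A B : Set α) :
    sSup (g '' (A ∪ B)) = max (sSup (g '' A)) (sSup (g '' B)) := by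
  rcases A.eq_empty_or_nonempty with rfl | hA
  · simp [sSup_image_nonneg hg₀ B]
  rcases B.eq_empty_or_nonempty with rfl | hB
  · simp [sSup_image_nonneg hg₀ A]
  rw [image_union, csSup_union (bddAbove_image_of_le_one hg₁ A) (hA.image g)
    (bddAbove_image_of_le_one hg₁ B) (hB.image g)]

end SupImage

noncomputable def PosCap.ofUSC (g : X → ℝ) (hg₀ : ∀ x, 0 ≤ g x) (hg₁ : ∀ x, g x ≤ 1)
    (hg : UpperSemicontinuous g) (hsup : sSup (range g) = 1) : PosCap X :=
  ⟨{ toFun B := sSup (g '' B)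
     nonneg' := sSup_image_nonneg hg₀
     le_one' B := Real.sSup_le (by rintro _ ⟨x, -, rfl⟩; exact hg₁ x) zero_le_one
     empty' := by simp
     univ' := by rwa [image_univ]
     mono' _ _ := sSup_image_mono hg₀ hg₁
     usc' F _ a ha := by
       obtain ⟨a₁, ha₁, ha₁a⟩ := exists_between ha
       refine ⟨g ⁻¹' Iio a₁, hg.isOpen_preimage a₁, fun x hx => ?_, fun B hB _ => ?_⟩
       · exact (le_csSup (bddAbove_image_of_le_one hg₁ F) ⟨x, hx, rfl⟩).trans_lt ha₁
       · refine (Real.sSup_le ?_ ((sSup_image_nonneg hg₀ F).trans ha₁.le)).trans_lt ha₁a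
         rintro _ ⟨x, hx, rfl⟩
         exact (hB hx).le },
    fun A B _ _ => sSup_image_union hg₀ hg₁ A B⟩

/-- For `ℓ U` the limit of `capOpen κ U` along an ultrafilter, this is the density of the limit
possibility capacity. -/
noncomputable def nhdsInf (ℓ : Set X → ℝ) (x : X) : ℝ :=
  sInf (ℓ '' {U | IsOpen U ∧ x ∈ U})

section NhdsInf

variable {ℓ : Set X → ℝ}

lemma nhdsInf_le (hℓ : ∀ U, ℓ U ∈ Set.Icc (0 : ℝ) 1) {U : Set X} (hU : IsOpen U) {x : X}
    (hx : x ∈ U) : nhdsInf ℓ x ≤ ℓ U :=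
  csInf_le ⟨0, by rintro _ ⟨V, -, rfl⟩; exact (hℓ V).1⟩ ⟨U, ⟨hU, hx⟩, rfl⟩

lemma nhdsInf_nonneg (hℓ : ∀ U, ℓ U ∈ Set.Icc (0 : ℝ) 1) (x : X) : 0 ≤ nhdsInf ℓ x :=
  Real.sInf_nonneg (by rintro _ ⟨V, -, rfl⟩; exact (hℓ V).1)

lemma nhdsInf_le_one (hℓ : ∀ U, ℓ U ∈ Set.Icc (0 : ℝ) 1) (x : X) : nhdsInf ℓ x ≤ 1 :=
  (nhdsInf_le hℓ isOpen_univ (mem_univ x)).trans (hℓ _).2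

lemma exists_lt_of_nhdsInf_lt {x : X} {a : ℝ} (h : nhdsInf ℓ x < a) :
    ∃ U, IsOpen U ∧ x ∈ U ∧ ℓ U < a := by
  obtain ⟨_, ⟨U, ⟨hU, hxU⟩, rfl⟩, hUa⟩ :=
    exists_lt_of_csInf_lt (s := ℓ '' {U | IsOpen U ∧ x ∈ U})
      ⟨_, ⟨univ, ⟨isOpen_univ, mem_univ x⟩, rfl⟩⟩ h
  exact ⟨U, hU, hxU, hUa⟩

lemma upperSemicontinuous_nhdsInf (hℓ : ∀ U, ℓ U ∈ Set.Icc (0 : ℝ) 1) :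
    UpperSemicontinuous (nhdsInf ℓ) := fun x a h => by
  obtain ⟨U, hU, hxU, hUa⟩ := exists_lt_of_nhdsInf_lt h
  exact Filter.mem_of_superset (hU.mem_nhds hxU) fun y hy => (nhdsInf_le hℓ hU hy).trans_lt hUa

end NhdsInf

namespace PosCap

lemma exists_tendsto_capOpen (𝔘 : Ultrafilter (PosCap X)) (U : Set X) :
    ∃ l ∈ Set.Icc (0 : ℝ) 1, Tendsto (fun κ : PosCap X => capOpen κ.1 U) 𝔘 (𝓝 l) :=
  isCompact_Icc.ultrafilter_le_nhds (𝔘.map fun κ : PosCap X => capOpen κ.1 U) <| by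
    rw [Ultrafilter.coe_map, le_principal_iff]
    exact mem_map.2 (univ_mem' fun κ : PosCap X => ⟨capOpen_nonneg κ.1 U, capOpen_le_one κ.1 U⟩)

section Limit

variable [CompactSpace X] [T2Space X] {𝔘 : Ultrafilter (PosCap X)} {ℓ : Set X → ℝ}

lemma eventually_toFun_lt (hℓ : ∀ U, Tendsto (fun κ : PosCap X => capOpen κ.1 U) 𝔘 (𝓝 (ℓ U)))
    {F : Set X} (hF : IsClosed F) {a : ℝ} (ha : 0 < a) (h : ∀ x ∈ F, nhdsInf ℓ x < a) :
    ∀ᶠ κ in (𝔘 : Filter (PosCap X)), κ.1.toFun F < a := by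
  choose! U hU hxU hUa using fun x hx => exists_lt_of_nhdsInf_lt (h x hx)
  obtain ⟨t, htF, hFt⟩ :=
    hF.isCompact.elim_nhds_subcover U fun x hx => (hU x hx).mem_nhds (hxU x hx)
  filter_upwards [(eventually_all_finset t).2 fun x hx =>
    (hℓ (U x)).eventually_lt_const (hUa x (htF x hx))] with κ hκ
  exact toFun_lt_of_subset_biUnion κ hF t (fun x hx => hU x (htF x hx)) hFt ha hκ

lemma sSup_range_nhdsInf (hℓ₀ : ∀ U, ℓ U ∈ Set.Icc (0 : ℝ) 1)
    (hℓ : ∀ U, Tendsto (fun κ : PosCap X => capOpen κ.1 U) 𝔘 (𝓝 (ℓ U))) :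
    sSup (range (nhdsInf ℓ)) = 1 := by
  have hle : ∀ r ∈ range (nhdsInf ℓ), r ≤ 1 := by rintro _ ⟨x, rfl⟩; exact nhdsInf_le_one hℓ₀ x
  refine le_antisymm (Real.sSup_le hle zero_le_one) (not_lt.1 fun hlt => ?_)
  obtain ⟨κ, hκ⟩ := (eventually_toFun_lt hℓ isClosed_univ one_pos fun x _ =>
    (le_csSup ⟨1, hle⟩ (mem_range_self x)).trans_lt hlt).exists
  exact hκ.ne κ.1.univ'

lemma tendsto_ofUSC_nhdsInf (hℓ₀ : ∀ U, ℓ U ∈ Set.Icc (0 : ℝ) 1)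
    (hℓ : ∀ U, Tendsto (fun κ : PosCap X => capOpen κ.1 U) 𝔘 (𝓝 (ℓ U))) :
    (𝔘 : Filter (PosCap X)) ≤ 𝓝 (ofUSC (nhdsInf ℓ) (nhdsInf_nonneg hℓ₀) (nhdsInf_le_one hℓ₀)
      (upperSemicontinuous_nhdsInf hℓ₀) (sSup_range_nhdsInf hℓ₀ hℓ)) := by
  refine tendsto_id.mono_right (tendsto_nhds (fun F hF a ha => ?_) fun U hU b hb => ?_)
  · exact eventually_toFun_lt hℓ hF ((sSup_image_nonneg (nhdsInf_nonneg hℓ₀) F).trans_lt ha)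
      fun x hx =>
        (le_csSup (bddAbove_image_of_le_one (nhdsInf_le_one hℓ₀) F) ⟨x, hx, rfl⟩).trans_lt ha
  · obtain ⟨_, ⟨K, ⟨-, hKU⟩, rfl⟩, hbK⟩ := exists_lt_of_lt_csSup
      (Set.Nonempty.image _ (s := {K | IsClosed K ∧ K ⊆ U})
        ⟨∅, isClosed_empty, empty_subset U⟩) hb
    rcases K.eq_empty_or_nonempty with rfl | hK
    · refine Eventually.of_forall fun κ => lt_of_lt_of_le ?_ (capOpen_nonneg κ.1 U)
      simpa [ofUSC] using hbK
    · obtain ⟨_, ⟨x, hxK, rfl⟩, hbx⟩ := exists_lt_of_lt_csSup (hK.image _) hbK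
      exact (hℓ U).eventually_const_lt (hbx.trans_le (nhdsInf_le hℓ₀ hU (hKU hxK)))

end Limit

instance compactSpace [CompactSpace X] [T2Space X] : CompactSpace (PosCap X) where
  isCompact_univ := isCompact_iff_ultrafilter_le_nhds.2 fun 𝔘 _ => by
    choose ℓ hℓ₀ hℓ using exists_tendsto_capOpen 𝔘
    exact ⟨_, trivial, tendsto_ofUSC_nhdsInf hℓ₀ hℓ⟩

end PosCap

/-- The size of a basic neighbourhood in `M_∪X`: finitely many test sets and a tolerance. -/
structure Gauge (X : Type*) where
  sets : Set (Set X)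
  finite_sets : sets.Finite
  δ : ℝ
  δ_pos : 0 < δ

namespace Gauge

instance : Preorder (Gauge X) where
  le R₁ R₂ := R₁.sets ⊆ R₂.sets ∧ R₂.δ ≤ R₁.δ
  le_refl _ := ⟨subset_rfl, le_rfl⟩
  le_trans _ _ _ h₁ h₂ := ⟨h₁.1.trans h₂.1, h₂.2.trans h₁.2⟩

instance : IsDirectedOrder (Gauge X) where
  directed R₁ R₂ := ⟨⟨R₁.sets ∪ R₂.sets, R₁.finite_sets.union R₂.finite_sets, min R₁.δ R₂.δ,
    lt_min R₁.δ_pos R₂.δ_pos⟩, ⟨subset_union_left, min_le_left _ _⟩,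
    ⟨subset_union_right, min_le_right _ _⟩⟩

instance : Nonempty (Gauge X) := ⟨⟨∅, finite_empty, 1, one_pos⟩⟩

variable (R : Gauge X)

def Dominated (ν κ : PosCap X) : Prop :=
  ∀ U ∈ R.sets, ∀ V ∈ R.sets, IsOpen V → closure U ⊆ V →
    ν.1.toFun (closure U) ≤ capOpen κ.1 V + R.δ

def Near (ν κ : PosCap X) : Prop := R.Dominated ν κ ∧ R.Dominated κ ν

def Linked (ν μ : PosCap X) : Prop := ∃ κ, R.Near ν κ ∧ R.Near μ κ

def thicken (S : Set (PosCap X)) : Set (PosCap X) := {κ | ∃ ν ∈ S, R.Near ν κ}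

variable {R}

lemma Dominated.anti {R' : Gauge X} (hR : R ≤ R') {ν κ : PosCap X} (h : R'.Dominated ν κ) :
    R.Dominated ν κ := fun U hU V hV hVo hUV =>
  (h U (hR.1 hU) V (hR.1 hV) hVo hUV).trans (add_le_add_right hR.2 _)

lemma Linked.anti {R' : Gauge X} (hR : R ≤ R') {ν μ : PosCap X} (h : R'.Linked ν μ) :
    R.Linked ν μ :=
  let ⟨κ, hν, hμ⟩ := h
  ⟨κ, ⟨hν.1.anti hR, hν.2.anti hR⟩, ⟨hμ.1.anti hR, hμ.2.anti hR⟩⟩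

lemma Linked.symm {ν μ : PosCap X} (h : R.Linked ν μ) : R.Linked μ ν :=
  let ⟨κ, hν, hμ⟩ := h
  ⟨κ, hμ, hν⟩

lemma dominated_congr {ν ν' κ κ' : PosCap X} (hν : ∀ F, IsClosed F → ν.1.toFun F = ν'.1.toFun F)
    (hκ : ∀ F, IsClosed F → κ.1.toFun F = κ'.1.toFun F) :
    R.Dominated ν κ ↔ R.Dominated ν' κ' := by
  simp only [Dominated, hν _ isClosed_closure, capOpen_congr hκ]

lemma Dominated.join {ν₁ ν₂ κ₁ κ₂ : PosCap X} (h₁ : R.Dominated ν₁ κ₁) (h₂ : R.Dominated ν₂ κ₂)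
    (s : ℝ) (hs : s ∈ Set.Icc (0 : ℝ) 1) :
    R.Dominated (PosCap.join s hs ν₁ ν₂) (PosCap.join s hs κ₁ κ₂) := by
  intro U hU V hV hVo hUV
  rw [PosCap.join_toFun, PosCap.capOpen_join, ← max_add_add_right]
  have := h₁ U hU V hV hVo hUV
  exact max_le_max (by nlinarith [hs.1, hs.2, R.δ_pos]) (h₂ U hU V hV hVo hUV)

lemma bconvexP_thicken {S : Set (PosCap X)} (hS : BConvexP S) : BConvexP (R.thicken S) := by
  rintro κ₁ ⟨ν₁, hν₁, h₁⟩ κ₂ ⟨ν₂, hν₂, h₂⟩ s hs κ hκ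
  refine ⟨PosCap.join s hs ν₁ ν₂, hS.join_mem hν₁ hν₂ hs, ?_, ?_⟩
  · exact (dominated_congr (fun _ _ => rfl) hκ).2 (h₁.1.join h₂.1 s hs)
  · exact (dominated_congr hκ fun _ _ => rfl).2 (h₁.2.join h₂.2 s hs)

lemma eventually_near (ν : PosCap X) : ∀ᶠ κ in 𝓝 ν, R.Near ν κ := by
  have key : ∀ U ∈ R.sets, ∀ V ∈ R.sets, ∀ᶠ κ in 𝓝 ν, IsOpen V → closure U ⊆ V →
      ν.1.toFun (closure U) ≤ capOpen κ.1 V + R.δ ∧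
        κ.1.toFun (closure U) ≤ capOpen ν.1 V + R.δ := by
    intro U _ V _
    by_cases hUV : IsOpen V ∧ closure U ⊆ V
    · have hle := toFun_le_capOpen (ν := ν.1) isClosed_closure hUV.2
      filter_upwards [PosCap.lowerSemicontinuous_capOpen hUV.1 ν _
          (show ν.1.toFun (closure U) - R.δ < capOpen ν.1 V by linarith [R.δ_pos]),
        PosCap.upperSemicontinuous_toFun isClosed_closure ν _
          (show ν.1.toFun (closure U) < capOpen ν.1 V + R.δ by linarith [R.δ_pos])]
        with κ h₁ h₂ _ _
      exact ⟨by linarith, h₂.le⟩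
    · exact Eventually.of_forall fun κ h₁ h₂ => absurd ⟨h₁, h₂⟩ hUV
  filter_upwards [(eventually_all_finite R.finite_sets).2 fun U hU =>
    (eventually_all_finite R.finite_sets).2 (key U hU)] with κ hκ
  exact ⟨fun U hU V hV hVo hUV => (hκ U hU V hV hVo hUV).1,
    fun U hU V hV hVo hUV => (hκ U hU V hV hVo hUV).2⟩

lemma subset_interior_thicken (S : Set (PosCap X)) : S ⊆ interior (R.thicken S) :=
  fun ν hν => mem_interior_iff_mem_nhds.2 ((eventually_near ν).mono fun _ hκ => ⟨ν, hν, hκ⟩)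

lemma Linked.toFun_closure_le {ν μ : PosCap X} (h : R.Linked ν μ) {U₁ U₂ U₃ : Set X}
    (h₁ : U₁ ∈ R.sets) (h₂ : U₂ ∈ R.sets) (h₃ : U₃ ∈ R.sets) (hU₂ : IsOpen U₂) (hU₃ : IsOpen U₃)
    (h₁₂ : closure U₁ ⊆ U₂) (h₂₃ : closure U₂ ⊆ U₃) :
    ν.1.toFun (closure U₁) ≤ μ.1.toFun (closure U₃) + 2 * R.δ := by
  obtain ⟨κ, hν, hμ⟩ := h
  have := hν.1 U₁ h₁ U₂ h₂ hU₂ h₁₂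
  have := hμ.2 U₂ h₂ U₃ h₃ hU₃ h₂₃
  have := capOpen_le_toFun_closure (ν := κ.1) (U := U₂)
  have := capOpen_le_toFun_closure (ν := μ.1) (U := U₃)
  linarith

/-- Along a chain `K ⊆ O₁ ⋐ O₂ ⋐ O₃ ⋐ O₄`, where `O₄` comes from upper semicontinuity of `μ`
at `K`, a linked pair close to `(ν, μ)` carries `ν(K)` to `μ(K)` up to five tolerances. -/
lemma toFun_le_of_forall_mem_closure_linked [CompactSpace X] [T2Space X] {ν μ : PosCap X}
    (h : ∀ R : Gauge X, (ν, μ) ∈ closure {q : PosCap X × PosCap X | R.Linked q.1 q.2})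
    {K : Set X} (hK : IsClosed K) : ν.1.toFun K ≤ μ.1.toFun K := by
  refine le_of_forall_pos_lt_add fun ε hε => ?_
  have hε₅ : 0 < ε / 5 := by positivity
  obtain ⟨O₄, hO₄, hKO₄, hμO₄⟩ := μ.1.usc' K hK (μ.1.toFun K + ε / 5) (by linarith)
  obtain ⟨O₃, hO₃, hKO₃, h₃₄⟩ := normal_exists_closure_subset hK hO₄ hKO₄
  obtain ⟨O₂, hO₂, hKO₂, h₂₃⟩ := normal_exists_closure_subset hK hO₃ hKO₃
  obtain ⟨O₁, hO₁, hKO₁, h₁₂⟩ := normal_exists_closure_subset hK hO₂ hKO₂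
  let R : Gauge X := ⟨{O₁, O₂, O₃}, by simp, ε / 5, hε₅⟩
  obtain ⟨q, ⟨hq₁, hq₂⟩, hq⟩ := mem_closure_iff.1 (h R)
    ({κ | capOpen ν.1 O₁ - ε / 5 < capOpen κ.1 O₁} ×ˢ
      {κ | κ.1.toFun (closure O₃) < μ.1.toFun (closure O₃) + ε / 5})
    ((PosCap.isOpen_setOf_lt_capOpen hO₁ _).prod
      (PosCap.isOpen_setOf_toFun_lt isClosed_closure _))
    ⟨sub_lt_self _ hε₅, lt_add_of_pos_right _ hε₅⟩
  have hchain := hq.toFun_closure_le (U₁ := O₁) (U₂ := O₂) (U₃ := O₃) (by simp [R])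
    (by simp [R]) (by simp [R]) hO₂ hO₃ h₁₂ h₂₃
  have := toFun_le_capOpen (ν := ν.1) hK hKO₁
  have := capOpen_le_toFun_closure (ν := q.1.1) (U := O₁)
  have := hμO₄ _ h₃₄ isClosed_closure.isCompact
  have hδ : R.δ = ε / 5 := rfl
  simp only [mem_ofPred_eq] at hq₁ hq₂
  linarith

lemma exists_disjoint_thicken [CompactSpace X] [T2Space X] {A D : Set (PosCap X)}
    (hA : IsClosed A) (hD : IsClosed D) (hDb : BConvexP D) (hAD : Disjoint A D) :
    ∃ R : Gauge X, Disjoint (R.thicken A) (R.thicken D) := by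
  by_contra! hR
  let Z : Gauge X → Set (PosCap X × PosCap X) :=
    fun R => closure ({q | R.Linked q.1 q.2} ∩ A ×ˢ D)
  have hZAD : ∀ R, Z R ⊆ A ×ˢ D := fun R => closure_minimal inter_subset_right (hA.prod hD)
  have hZne : ∀ R, (Z R).Nonempty := fun R => by
    obtain ⟨κ, ⟨ν, hν, hνκ⟩, μ, hμ, hμκ⟩ := Set.not_disjoint_iff.1 (hR R)
    exact ⟨(ν, μ), subset_closure ⟨⟨κ, hνκ, hμκ⟩, hν, hμ⟩⟩
  obtain ⟨q, hq⟩ := IsCompact.nonempty_iInter_of_directed_nonempty_isCompact_isClosed Z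
    (Antitone.directed_ge fun _ _ hR =>
      closure_mono (inter_subset_inter_left _ fun _ h => h.anti hR))
    hZne (fun R => (hA.prod hD).isCompact.of_isClosed_subset isClosed_closure (hZAD R))
    fun _ => isClosed_closure
  rw [mem_iInter] at hq
  have hlinked : ∀ R : Gauge X, q ∈ closure {q : PosCap X × PosCap X | R.Linked q.1 q.2} :=
    fun R => closure_mono inter_subset_left (hq R)
  have hswap : ∀ R : Gauge X, q.swap ∈ closure {q : PosCap X × PosCap X | R.Linked q.1 q.2} :=
    fun R => map_mem_closure continuous_swap (hlinked R) fun _ h => Linked.symm h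
  obtain ⟨hq₁, hq₂⟩ := hZAD _ (hq (Classical.arbitrary _))
  refine hAD.ne_of_mem hq₁ (hDb.mem_of_agree hq₂ fun F hF => ?_) rfl
  exact le_antisymm (toFun_le_of_forall_mem_closure_linked hlinked hF)
    (toFun_le_of_forall_mem_closure_linked hswap hF)

end Gauge

end

/-- The convexity of closed B-convex subsets of `M_∪X` is normal. -/
theorem bconvexity_poscap_normal {X : Type*} [TopologicalSpace X] [CompactSpace X]
    [T2Space X] (A D : Set (PosCap X)) (hA : IsClosed A) (hD : IsClosed D)
    (hAb : BConvexP A) (hDb : BConvexP D) (hdisj : Disjoint A D) :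
    ∃ S₁ S₂ : Set (PosCap X), IsClosed S₁ ∧ IsClosed S₂ ∧ BConvexP S₁ ∧ BConvexP S₂ ∧
      S₁ ∪ S₂ = Set.univ ∧ Disjoint A S₂ ∧ Disjoint D S₁ := by
  obtain ⟨R, hR⟩ := Gauge.exists_disjoint_thicken hA hD hDb hdisj
  obtain ⟨P, hP, hPc, hAP, hDP⟩ :=
    exists_halfspace_of_disjoint (R.bconvexP_thicken hAb) (R.bconvexP_thicken hDb) hR
  refine ⟨closure P, closure Pᶜ, isClosed_closure, isClosed_closure, hP.closure, hPc.closure,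
    eq_univ_of_subset (union_subset_union subset_closure subset_closure) (union_compl_self P),
    ?_, ?_⟩
  · rw [← subset_compl_iff_disjoint_right, ← interior_compl, compl_compl]
    exact (R.subset_interior_thicken A).trans (interior_mono hAP)
  · rw [← subset_compl_iff_disjoint_right, ← interior_compl]
    exact (R.subset_interior_thicken D).trans (interior_mono hDP)
end

section
/- Let ⋆ and ∗ be continuous t-norms, X₁,...,Xₙ compact Hausdorff spaces, u_i : ∏ X_j → [0,1] continuous, and define eu_i(ν₁,...,νₙ) = ∫^{∨⋆} u_i d(ν₁ ⊛ ⋯ ⊛ νₙ) where ⊛ is the tensor product of possibility capacities with density [ν₁ ⊛ ν₂](x,y) = [ν₁](x) ∗ [ν₂](y). Then for each i and each fixed choice of the other coordinates, the map ν_i ↦ eu_i(ν₁,...,νₙ) is quasiconvex with respect to B-convexity: for every s ∈ [0,1] the sublevel set {ν_i ∈ M_∪X_i : eu_i ≤ s} is B-convex, i.e., eu_i(c·ν ∨ ν', ...) ≤ max{eu_i(ν,...), eu_i(ν',...)} for all ν, ν' ∈ M_∪X_i and c ∈ [0,1]. -/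
open Set

/-- The expected payoff `∫^{∨⋆} u d(ν₁ ⊛ ⋯ ⊛ νₙ)`, expressed via the densities
`[ν_j](x) = ν_j({x})`: the tensor product of possibility capacities generated by the t-norm
`Tast` is the possibility capacity with density `x ↦ ∗_j [ν_j](x_j)`, and the value of a
possibility capacity on a closed set is the supremum of its density there. -/
noncomputable def euPay {n : ℕ} {Z : Fin n → Type*} [∀ j, TopologicalSpace (Z j)]
    (Tstar Tast : Tnorm) (u : (∀ j, Z j) → ℝ) (ν : ∀ j, PosCap (Z j)) : ℝ :=
  sSup ((fun t : ℝ =>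
      Tstar.op
        (sSup ((fun x : ∀ j, Z j =>
            (List.ofFn fun j => (ν j).1.toFun {x j}).foldr Tast.op 1) ''
          (u ⁻¹' Set.Icc t 1)))
        t) '' Set.Icc (0:ℝ) 1)

/-!
The density of the tensor product at a profile `x` is monotone in each factor's density at `x`.
Since the density of `c·ν i ∨ ν'` at `x i` is either `c·[ν i](x i) ≤ [ν i](x i)` or `[ν'](x i)`,
the density of the modified profile is pointwise below the maximum of the other two densities.
Both suprema defining the integral preserve such a pointwise bound, the outer one because a
t-norm distributes over `max`.
-/

namespace Tnorm

variable (T : Tnorm)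

lemma foldr_le_one : ∀ l : List ℝ, (∀ a ∈ l, a ≤ 1) → l.foldr T.op 1 ≤ 1
  | [], _ => le_rfl
  | a :: l, h => by
    have hrest := foldr_le_one l fun b hb => h b (List.mem_cons_of_mem a hb)
    calc T.op a (l.foldr T.op 1) ≤ T.op 1 1 := T.mono' _ _ _ _ (h a List.mem_cons_self) hrest
      _ = 1 := T.one_id' 1 ⟨zero_le_one, le_rfl⟩

lemma foldr_ofFn_mono : ∀ {m : ℕ} {f g : Fin m → ℝ}, f ≤ g →
    (List.ofFn f).foldr T.op 1 ≤ (List.ofFn g).foldr T.op 1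
  | 0, _, _, _ => le_rfl
  | _ + 1, f, g, h => by
    simp only [List.ofFn_succ, List.foldr_cons]
    exact T.mono' _ _ _ _ (h 0) (foldr_ofFn_mono fun j => h j.succ)

lemma op_max_left_s15 (a b t : ℝ) : T.op (max a b) t = max (T.op a t) (T.op b t) :=
  Monotone.map_max fun _ _ h => T.mono' _ _ _ _ h le_rfl

end Tnorm

/-- In `ℝ` the bound also holds for empty `S`, where every supremum is the junk value `0`. -/
lemma Real.sSup_image_le_max {α : Type*} {S : Set α} {f g h : α → ℝ}
    (hg : BddAbove (g '' S)) (hh : BddAbove (h '' S)) (hle : ∀ x ∈ S, f x ≤ max (g x) (h x)) :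
    sSup (f '' S) ≤ max (sSup (g '' S)) (sSup (h '' S)) := by
  rcases S.eq_empty_or_nonempty with rfl | hS
  · simp
  refine csSup_le (hS.image f) ?_
  rintro _ ⟨x, hx, rfl⟩
  exact (hle x hx).trans (max_le_max (le_csSup hg ⟨x, hx, rfl⟩) (le_csSup hh ⟨x, hx, rfl⟩))

section TensorDensity

variable {n : ℕ} {Z : Fin n → Type*} [∀ j, TopologicalSpace (Z j)]

noncomputable def tensorDensity (T : Tnorm) (ν : ∀ j, PosCap (Z j)) (x : ∀ j, Z j) : ℝ :=
  (List.ofFn fun j => (ν j).1.toFun {x j}).foldr T.op 1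

lemma tensorDensity_le_one (T : Tnorm) (ν : ∀ j, PosCap (Z j)) (x : ∀ j, Z j) :
    tensorDensity T ν x ≤ 1 :=
  T.foldr_le_one _ fun a ha => by
    obtain ⟨j, rfl⟩ := List.mem_ofFn.mp ha
    exact (ν j).1.le_one' _

lemma tensorDensity_update_mono [DecidableEq (Fin n)] (T : Tnorm) (ν : ∀ j, PosCap (Z j))
    {i : Fin n} {κ μ : PosCap (Z i)} {x : ∀ j, Z j} (h : κ.1.toFun {x i} ≤ μ.1.toFun {x i}) :
    tensorDensity T (Function.update ν i κ) x ≤ tensorDensity T (Function.update ν i μ) x := by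
  refine T.foldr_ofFn_mono fun j => ?_
  rcases eq_or_ne j i with rfl | hj
  · simpa using h
  · simp [Function.update_of_ne hj]

lemma euPay_le_max_of_tensorDensity_le (Tstar Tast : Tnorm) (u : (∀ j, Z j) → ℝ)
    {ρ μ μ' : ∀ j, PosCap (Z j)}
    (hle : ∀ x, tensorDensity Tast ρ x ≤ max (tensorDensity Tast μ x) (tensorDensity Tast μ' x)) :
    euPay Tstar Tast u ρ ≤ max (euPay Tstar Tast u μ) (euPay Tstar Tast u μ') := by
  have hdens (w : ∀ j, PosCap (Z j)) (S : Set (∀ j, Z j)) :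
      BddAbove (tensorDensity Tast w '' S) :=
    ⟨1, by rintro _ ⟨x, -, rfl⟩; exact tensorDensity_le_one Tast w x⟩
  have hpay (w : ∀ j, PosCap (Z j)) :
      BddAbove ((fun t => Tstar.op (sSup (tensorDensity Tast w '' (u ⁻¹' Icc t 1))) t) ''
        Icc 0 1) := by
    refine ⟨Tstar.op 1 1, ?_⟩
    rintro _ ⟨t, ht, rfl⟩
    refine Tstar.mono' _ _ _ _ (Real.sSup_le ?_ zero_le_one) ht.2
    rintro _ ⟨x, -, rfl⟩
    exact tensorDensity_le_one Tast w x
  refine Real.sSup_image_le_max (hpay μ) (hpay μ') fun t _ => ?_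
  rw [← Tstar.op_max_left_s15]
  exact Tstar.mono' _ _ _ _ (Real.sSup_image_le_max (hdens μ _) (hdens μ' _) fun x _ => hle x)
    le_rfl

end TensorDensity

theorem euPay_quasiconvex_general {n : ℕ} {Z : Fin n → Type*} [∀ j, TopologicalSpace (Z j)]
    (Tstar Tast : Tnorm) (i : Fin n) (u : (∀ j, Z j) → ℝ)
    (ν : ∀ j, PosCap (Z j)) (ν' : PosCap (Z i)) (c : ℝ) (hc : c ∈ Set.Icc (0:ℝ) 1)
    (κ : PosCap (Z i))
    (hκ : ∀ x : Z i, κ.1.toFun {x} = max (c * (ν i).1.toFun {x}) (ν'.1.toFun {x})) :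
    euPay Tstar Tast u (Function.update ν i κ) ≤
      max (euPay Tstar Tast u ν) (euPay Tstar Tast u (Function.update ν i ν')) := by
  classical
  refine euPay_le_max_of_tensorDensity_le Tstar Tast u fun x => ?_
  rcases le_total (c * (ν i).1.toFun {x i}) (ν'.1.toFun {x i}) with h | h
  · exact le_max_of_le_right (tensorDensity_update_mono Tast ν (by rw [hκ, max_eq_right h]))
  · have hκν : κ.1.toFun {x i} ≤ (ν i).1.toFun {x i} := by
      rw [hκ, max_eq_left h]
      exact mul_le_of_le_one_left ((ν i).1.nonneg' _) hc.2
    have hle := tensorDensity_update_mono Tast ν hκν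
    rw [Function.update_eq_self] at hle
    exact le_max_of_le_left hle

/-- Quasiconvexity of the expected payoff in the `i`-th mixed strategy with respect to
B-convexity: replacing the `i`-th strategy by (a possibility capacity with density)
`c·[ν i] ∨ [ν']` does not exceed the maximum of the two payoffs. -/
theorem euPay_quasiconvex {n : ℕ} {Z : Fin n → Type*} [∀ j, TopologicalSpace (Z j)]
    [∀ j, CompactSpace (Z j)] [∀ j, T2Space (Z j)]
    (Tstar Tast : Tnorm) (i : Fin n) (u : (∀ j, Z j) → ℝ) (hu : Continuous u)
    (hur : ∀ x, u x ∈ Set.Icc (0:ℝ) 1)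
    (ν : ∀ j, PosCap (Z j)) (ν' : PosCap (Z i)) (c : ℝ) (hc : c ∈ Set.Icc (0:ℝ) 1)
    (κ : PosCap (Z i))
    (hκ : ∀ x : Z i, κ.1.toFun {x} = max (c * (ν i).1.toFun {x}) (ν'.1.toFun {x})) :
    euPay Tstar Tast u (Function.update ν i κ) ≤
      max (euPay Tstar Tast u ν) (euPay Tstar Tast u (Function.update ν i ν')) :=
  euPay_quasiconvex_general Tstar Tast i u ν ν' c hc κ hκ
end

section
/- Let X₁, X₂ be compact Hausdorff spaces, ∗ a continuous t-norm, and ⊛ the tensor product of possibility capacities generated by ∗. Then M(p_i) ∘ ⊛ = pr_i for i = 1,2: for all ν₁ ∈ M_∪X₁, ν₂ ∈ M_∪X₂ and every closed A ⊆ X_i, (ν₁ ⊛ ν₂)(p_i⁻¹(A)) = ν_i(A), where p_i : X₁×X₂ → X_i is the projection. -/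
open Set

/-! Compactness reduces the value of a possibility capacity on a closed set to its values on
points: upper semicontinuity gives each point a neighbourhood of small capacity, finitely many
of them cover the set, and maxitivity on closed sets passes the bound to the union. Hence
`κ(p⁻¹A) ≤ ν(A)` because `a ∗ b ≤ a` on `[0,1]`, while `κ(p⁻¹A) ≥ ν(A)` because the densities
of the other factor come arbitrarily close to `1` and `∗` is continuous with unit `1`. -/

lemma Capacity.singleton_mem_Icc {X : Type*} [TopologicalSpace X] (ν : Capacity X) (x : X) :
    ν.toFun {x} ∈ Icc (0 : ℝ) 1 :=
  ⟨ν.nonneg' _, ν.le_one' _⟩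

namespace Tnorm

lemma op_le_left (T : Tnorm) {s t : ℝ} (hs : s ∈ Icc (0 : ℝ) 1) (ht : t ≤ 1) : T.op s t ≤ s :=
  calc T.op s t ≤ T.op s 1 := T.mono' _ _ _ _ le_rfl ht
    _ = s := T.one_id' s hs

lemma exists_pos_forall_sub_lt_op (T : Tnorm) {s : ℝ} (hs : s ∈ Icc (0 : ℝ) 1) {ε : ℝ}
    (hε : 0 < ε) :
    ∃ δ > 0, ∀ t, 1 - δ < t → t ≤ 1 → s - ε < T.op s t := by
  have hcont : Continuous (T.op s) := T.cont'.comp (continuous_const.prodMk continuous_id)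
  obtain ⟨δ, hδ, hclose⟩ := Metric.continuousAt_iff.mp hcont.continuousAt ε hε
  refine ⟨δ, hδ, fun t hlt hle => ?_⟩
  have hdist : dist t 1 < δ := by
    rw [Real.dist_eq, abs_of_nonpos (by linarith)]
    linarith
  have h := hclose hdist
  rw [Real.dist_eq, T.one_id' s hs] at h
  linarith [(abs_lt.mp h).1]

end Tnorm

namespace IsPossibility

variable {X : Type*} [TopologicalSpace X] {ν : Capacity X}

lemma biUnion_finset_lt (hν : IsPossibility ν) {ι : Type*} (t : Finset ι) {K : ι → Set X}
    (hK : ∀ i ∈ t, IsClosed (K i)) {a : ℝ} (ha : 0 < a) (h : ∀ i ∈ t, ν.toFun (K i) < a) :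
    ν.toFun (⋃ i ∈ t, K i) < a := by
  classical
  induction t using Finset.induction with
  | empty => simpa [ν.empty'] using ha
  | insert j t _ ih =>
    rw [Finset.forall_mem_insert] at hK h
    rw [Finset.set_biUnion_insert, hν _ _ hK.1 (isClosed_biUnion_finset hK.2)]
    exact max_lt h.1 (ih hK.2 h.2)

lemma lt_of_forall_singleton_lt [T2Space X] (hν : IsPossibility ν) {F : Set X}
    (hF : IsCompact F) {a : ℝ} (ha : 0 < a) (h : ∀ x ∈ F, ν.toFun {x} < a) : ν.toFun F < a := by
  have hnbhd : ∀ x : F, ∃ O : Set X, IsOpen O ∧ {(x : X)} ⊆ O ∧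
      ∀ B : Set X, B ⊆ O → IsCompact B → ν.toFun B < a := fun x =>
    ν.usc' {(x : X)} isClosed_singleton a (h x x.2)
  choose O hOopen hxO hOlt using hnbhd
  have hcover : F ⊆ ⋃ x : F, O x := fun y hy => mem_iUnion.2 ⟨⟨y, hy⟩, hxO ⟨y, hy⟩ rfl⟩
  obtain ⟨t, ht⟩ := hF.elim_finite_subcover O hOopen hcover
  obtain ⟨K, hKc, hKO, hFK⟩ := hF.finite_compact_cover t O (fun i _ => hOopen i) ht
  rw [hFK]
  exact hν.biUnion_finset_lt t (fun i _ => (hKc i).isClosed) ha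
    fun i _ => hOlt i (K i) (hKO i) (hKc i)

lemma le_of_forall_singleton_le [T2Space X] (hν : IsPossibility ν) {F : Set X}
    (hF : IsCompact F) {a : ℝ} (ha : 0 ≤ a) (h : ∀ x ∈ F, ν.toFun {x} ≤ a) : ν.toFun F ≤ a := by
  by_contra! hlt
  exact (hν.lt_of_forall_singleton_lt hF (ha.trans_lt hlt)
    fun x hx => (h x hx).trans_lt hlt).false

lemma exists_singleton_gt [CompactSpace X] [T2Space X] (hν : IsPossibility ν) {δ : ℝ}
    (hδ : 0 < δ) : ∃ x, 1 - δ < ν.toFun {x} := by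
  by_contra! hle
  have := hν.lt_of_forall_singleton_lt isCompact_univ one_pos
    fun x _ => (hle x).trans_lt (by linarith)
  exact this.ne ν.univ'

lemma exists_sub_lt_op [CompactSpace X] [T2Space X] (hν : IsPossibility ν) (T : Tnorm)
    {s : ℝ} (hs : s ∈ Icc (0 : ℝ) 1) {ε : ℝ} (hε : 0 < ε) : ∃ x, s - ε < T.op s (ν.toFun {x}) := by
  obtain ⟨δ, hδ, hclose⟩ := T.exists_pos_forall_sub_lt_op hs hε
  obtain ⟨x, hx⟩ := hν.exists_singleton_gt hδ
  exact ⟨x, hclose _ hx (ν.le_one' _)⟩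

lemma apply_preimage_eq {Z : Type*} [TopologicalSpace Z] [CompactSpace Z] [T2Space Z]
    [CompactSpace X] [T2Space X] {κ : Capacity Z} (hκ : IsPossibility κ) (hν : IsPossibility ν)
    {p : Z → X} (hp : Continuous p) (hle : ∀ z, κ.toFun {z} ≤ ν.toFun {p z})
    (happrox : ∀ x, ∀ ε > 0, ∃ z, p z = x ∧ ν.toFun {x} - ε < κ.toFun {z})
    {A : Set X} (hA : IsClosed A) : κ.toFun (p ⁻¹' A) = ν.toFun A := by
  apply le_antisymm
  · refine hκ.le_of_forall_singleton_le (hA.preimage hp).isCompact (ν.nonneg' A) fun z hz => ?_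
    exact (hle z).trans (ν.mono' _ _ (singleton_subset_iff.2 hz))
  · refine hν.le_of_forall_singleton_le hA.isCompact (κ.nonneg' _) fun x hx => ?_
    refine le_of_forall_pos_le_add fun ε hε => ?_
    obtain ⟨z, rfl, hz⟩ := happrox x ε hε
    have : κ.toFun {z} ≤ κ.toFun (p ⁻¹' A) := κ.mono' _ _ (singleton_subset_iff.2 hx)
    linarith

end IsPossibility

/-- The tensor product of possibility capacities (the possibility capacity `κ` with density
`[κ](x,y) = [ν₁](x) ∗ [ν₂](y)`) marginalizes to the factors: `κ(p_i⁻¹(A)) = ν_i(A)`. -/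
theorem tensor_marginals {X₁ X₂ : Type*}
    [TopologicalSpace X₁] [CompactSpace X₁] [T2Space X₁]
    [TopologicalSpace X₂] [CompactSpace X₂] [T2Space X₂]
    (T : Tnorm) (ν₁ : Capacity X₁) (ν₂ : Capacity X₂)
    (h₁ : IsPossibility ν₁) (h₂ : IsPossibility ν₂)
    (κ : Capacity (X₁ × X₂)) (hκp : IsPossibility κ)
    (hκ : ∀ (x : X₁) (y : X₂), κ.toFun {(x, y)} = T.op (ν₁.toFun {x}) (ν₂.toFun {y})) :
    (∀ A : Set X₁, IsClosed A → κ.toFun (Prod.fst ⁻¹' A) = ν₁.toFun A) ∧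
    (∀ A : Set X₂, IsClosed A → κ.toFun (Prod.snd ⁻¹' A) = ν₂.toFun A) := by
  constructor
  · intro A hA
    refine hκp.apply_preimage_eq h₁ continuous_fst (fun ⟨x, y⟩ => ?_) (fun x ε hε => ?_) hA
    · rw [hκ]
      exact T.op_le_left (ν₁.singleton_mem_Icc x) (ν₂.le_one' _)
    · obtain ⟨y, hy⟩ := h₂.exists_sub_lt_op T (ν₁.singleton_mem_Icc x) hε
      exact ⟨(x, y), rfl, by rwa [hκ]⟩
  · intro A hA
    refine hκp.apply_preimage_eq h₂ continuous_snd (fun ⟨x, y⟩ => ?_) (fun y ε hε => ?_) hA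
    · rw [hκ, T.comm']
      exact T.op_le_left (ν₂.singleton_mem_Icc y) (ν₁.le_one' _)
    · obtain ⟨x, hx⟩ := h₁.exists_sub_lt_op T (ν₂.singleton_mem_Icc y) hε
      exact ⟨(x, y), rfl, by rwa [hκ, T.comm']⟩
end
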